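/- arXiv:2004.11752 — 10 statements merged into one kernel-verified Lean document; each statement's English description precedes it below -/
import Mathlib

section
/- Let f be a function from two-element subsets of ℕ to [0,1], let n ≠ m in ℕ, write h = α + δ·f(n,m), and set P_{n,m} = { x ∈ ℓ² : ‖x‖_{ℓ²} ≤ (1/√2)·h·(x_n + x_m) }. Then for every x ∈ ℓ² with ‖x‖_{ℓ²} = 1 one has x ∈ P_{n,m} if and only if ‖x − e_{n,m}‖_{ℓ²} ≤ √(2(h−1)/h); in particular, every x ∈ P_{n,m} with ‖x‖_{ℓ²} = 1 satisfies ‖x − e_{n,m}‖_{ℓ²} ≤ 1/10. -/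
/- Context: ℓ² with canonical vectors (e n); e_{n,m} = (e n + e m)/√2.
Fix α, δ with 1 < α < α + δ ≤ 200/199.  For f with values in [0,1] and n ≠ m,
write h = α + δ·f(n,m) and P_{n,m} = { x ∈ ℓ² : ‖x‖_{ℓ²} ≤ (1/√2)·h·(x n + x m) }. -/

noncomputable section

abbrev ℓ2 : Type := lp (fun _ : ℕ => ℝ) 2

noncomputable def e (n : ℕ) : ℓ2 := lp.single 2 n 1

noncomputable def E (n m : ℕ) : ℓ2 := (Real.sqrt 2)⁻¹ • (e n + e m)

/-- The set `P_{n,m}` (for the value `h = α + δ·f(n,m)`). -/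
def Pset (h : ℝ) (n m : ℕ) : Set ℓ2 :=
  {x : ℓ2 | ‖x‖ ≤ (Real.sqrt 2)⁻¹ * h * (x n + x m)}

/-!
For unit vectors, `‖x - u‖² = 2 - 2⟪u, x⟫`, so a lower bound `⟪u, x⟫ ≥ 1/h` on the cosine of the
angle between `x` and `u` is the same as the distance bound `‖x - u‖² ≤ 2 (h - 1) / h`. Membership
of a unit vector in `P_{n,m}` is exactly `h ⟪e_{n,m}, x⟫ ≥ 1`, and for `h ≤ 200/199` the squared
radius `2 (h - 1) / h` is at most `1/100`.
-/

theorem norm_sub_le_sqrt_iff_one_le_mul_inner {F : Type*} [NormedAddCommGroup F]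
    [InnerProductSpace ℝ F] {x u : F} (hx : ‖x‖ = 1) (hu : ‖u‖ = 1) {h : ℝ} (h1 : 1 ≤ h) :
    ‖x - u‖ ≤ √(2 * (h - 1) / h) ↔ 1 ≤ h * inner ℝ u x := by
  have hpos : 0 < h := by linarith
  have hsq : ‖x - u‖ ^ 2 = 2 - 2 * inner ℝ u x := by
    rw [norm_sub_sq_real, hx, hu, real_inner_comm]; ring
  rw [Real.le_sqrt (norm_nonneg _) (div_nonneg (by linarith) hpos.le), hsq, le_div_iff₀ hpos]
  constructor <;> intro _ <;> linarith

theorem sqrt_two_mul_sub_one_div_le (h : ℝ) (h1 : 1 ≤ h) (h2 : h ≤ 200 / 199) :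
    √(2 * (h - 1) / h) ≤ 1 / 10 := by
  rw [Real.sqrt_le_left (by norm_num), div_le_iff₀ (by linarith)]
  linarith

theorem inner_e (n : ℕ) (x : ℓ2) : inner ℝ (e n) x = x n := by
  simp [e, lp.inner_single_left]

theorem inner_E (n m : ℕ) (x : ℓ2) : inner ℝ (E n m) x = (√2)⁻¹ * (x n + x m) := by
  simp [E, inner_smul_left, inner_add_left, inner_e, mul_add]

theorem norm_E {n m : ℕ} (hnm : n ≠ m) : ‖E n m‖ = 1 := by
  have hcoord (k : ℕ) (hk : k = n ∨ k = m) : E n m k = (√2)⁻¹ := by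
    simp only [E, e, lp.coeFn_smul, lp.coeFn_add, Pi.smul_apply, Pi.add_apply, lp.single_apply]
    rcases hk with rfl | rfl
    · simp [hnm.symm]
    · simp [hnm]
  have hinner : inner ℝ (E n m) (E n m) = (1 : ℝ) := by
    rw [inner_E, hcoord n (.inl rfl), hcoord m (.inr rfl)]
    field_simp
    norm_num
  rw [norm_eq_sqrt_real_inner, hinner, Real.sqrt_one]

theorem mem_Pset_iff (h : ℝ) (n m : ℕ) (x : ℓ2) :
    x ∈ Pset h n m ↔ ‖x‖ ≤ h * inner ℝ (E n m) x := by
  rw [Pset, Set.mem_ofPred_eq, inner_E, mul_left_comm, mul_assoc]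

theorem stmt2 (α δ : ℝ) (hα : 1 < α) (hδ : α < α + δ) (hαδ : α + δ ≤ 200 / 199)
    (f : ℕ → ℕ → ℝ) (hf : ∀ n m : ℕ, n ≠ m → f n m ∈ Set.Icc (0 : ℝ) 1)
    (n m : ℕ) (hnm : n ≠ m) (h : ℝ) (hh : h = α + δ * f n m) :
    (∀ x : ℓ2, ‖x‖ = 1 →
      (x ∈ Pset h n m ↔ ‖x - E n m‖ ≤ Real.sqrt (2 * (h - 1) / h))) ∧
    (∀ x : ℓ2, ‖x‖ = 1 → x ∈ Pset h n m → ‖x - E n m‖ ≤ 1 / 10) := by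
  obtain ⟨hf0, hf1⟩ := hf n m hnm
  have h1 : 1 ≤ h := by nlinarith
  have h2 : h ≤ 200 / 199 := by nlinarith
  have hmem (x : ℓ2) (hx : ‖x‖ = 1) :
      x ∈ Pset h n m ↔ ‖x - E n m‖ ≤ √(2 * (h - 1) / h) := by
    rw [mem_Pset_iff, hx, norm_sub_le_sqrt_iff_one_le_mul_inner hx (norm_E hnm) h1]
  exact ⟨hmem, fun x hx hxP =>
    ((hmem x hx).mp hxP).trans (sqrt_two_mul_sub_one_div_le h h1 h2)⟩
end
end

section
/- Let f, g be functions from two-element subsets of ℕ to [0,1], let r > 0, and let π : ℕ → ℕ be a bijection such that |g(π(n), π(m)) − f(n,m)| ≤ 2r for all n ≠ m. Let T : ℓ² → ℓ² be the linear isometry determined by T e_n = e_{π(n)} for all n. Then |‖T x‖_g − ‖x‖_f| ≤ 2δr·‖x‖_{ℓ²} for every x ∈ ℓ²; consequently ‖T x‖_g ≤ (1 + 2δr)·‖x‖_f and ‖x‖_f ≤ (1 + 2δr)·‖T x‖_g for every x ∈ ℓ². -/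
/- Context: ℓ² with canonical vectors (e n).  Fix α, δ with 1 < α < α + δ ≤ 200/199.
For f : two-element subsets of ℕ → [0,1] define the norm
‖x‖_f = sup( {‖x‖_{ℓ²}} ∪ { (1/√2)·(α + δ·f(n,m))·|x n + x m| : n ≠ m } ). -/

noncomputable section

def fnormSet (α δ : ℝ) (f : ℕ → ℕ → ℝ) (x : ℓ2) : Set ℝ :=
  {‖x‖} ∪ {r : ℝ | ∃ n m : ℕ, n ≠ m ∧
    r = (Real.sqrt 2)⁻¹ * (α + δ * f n m) * |x n + x m|}

noncomputable def fnorm (α δ : ℝ) (f : ℕ → ℕ → ℝ) (x : ℓ2) : ℝ :=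
  sSup (fnormSet α δ f x)

/-! Since `T` permutes coordinates (`T x (π k) = x k`), `‖T x‖_g = ‖x‖_{g ∘ π}`, and `g ∘ π` is
`2r`-close to `f`. Each term of the supremum defining these norms then moves by at most
`δ · 2r · |x n + x m| / √2 ≤ 2δr‖x‖`, by Cauchy–Schwarz against `e n + e m`, whose norm is `√2`.
The multiplicative bounds follow because `‖x‖ ≤ ‖x‖_f`. -/

open RealInnerProductSpace

lemma inner_e_left (k : ℕ) (x : ℓ2) : ⟪e k, x⟫ = x k := by
  classical
  simp [e, lp.inner_single_left]

lemma norm_e (k : ℕ) : ‖e k‖ = 1 := by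
  simp [e, lp.norm_single]

lemma inner_e_e_of_ne {n m : ℕ} (h : n ≠ m) : ⟪e n, e m⟫ = 0 := by
  rw [inner_e_left, e, lp.single_apply_ne _ _ _ h]

lemma norm_e_add_e_of_ne {n m : ℕ} (h : n ≠ m) : ‖e n + e m‖ = √2 := by
  rw [norm_add_eq_sqrt_iff_real_inner_eq_zero.mpr (inner_e_e_of_ne h), norm_e, norm_e]
  norm_num

lemma inv_sqrt_two_mul_abs_add_apply_le (x : ℓ2) {n m : ℕ} (h : n ≠ m) :
    (√2)⁻¹ * |x n + x m| ≤ ‖x‖ := by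
  rw [inv_mul_le_iff₀ (by positivity)]
  simpa [inner_add_left, inner_e_left, norm_e_add_e_of_ne h] using
    abs_real_inner_le_norm (e n + e m) x

section fnorm

variable {α δ : ℝ} {f g : ℕ → ℕ → ℝ}

-- Without this bound `sSup` would return its junk value `0`.
lemma fnormSet_bddAbove (hf : ∀ n m : ℕ, n ≠ m → f n m ∈ Set.Icc (0 : ℝ) 1) (x : ℓ2) :
    BddAbove (fnormSet α δ f x) := by
  refine ⟨(1 + |α| + |δ|) * ‖x‖, ?_⟩
  rintro y (rfl | ⟨n, m, hnm, rfl⟩)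
  · nlinarith [norm_nonneg x, abs_nonneg α, abs_nonneg δ]
  · have hcoef : |α + δ * f n m| ≤ 1 + |α| + |δ| := by
      obtain ⟨hf0, hf1⟩ := hf n m hnm
      have : |δ * f n m| ≤ |δ| := by
        rw [abs_mul, abs_of_nonneg hf0]
        exact mul_le_of_le_one_right (abs_nonneg δ) hf1
      linarith [abs_add_le α (δ * f n m), abs_nonneg α]
    calc (√2)⁻¹ * (α + δ * f n m) * |x n + x m|
        = (α + δ * f n m) * ((√2)⁻¹ * |x n + x m|) := by ring
      _ ≤ |α + δ * f n m| * ((√2)⁻¹ * |x n + x m|) := by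
          gcongr; exact le_abs_self _
      _ ≤ (1 + |α| + |δ|) * ‖x‖ := by
          gcongr; exact inv_sqrt_two_mul_abs_add_apply_le x hnm

lemma norm_le_fnorm (hf : ∀ n m : ℕ, n ≠ m → f n m ∈ Set.Icc (0 : ℝ) 1) (x : ℓ2) :
    ‖x‖ ≤ fnorm α δ f x :=
  le_csSup (fnormSet_bddAbove hf x) (Or.inl rfl)

lemma fnorm_le_fnorm_add (hδ : 0 ≤ δ) {c : ℝ} (hc : 0 ≤ c)
    (hf : ∀ n m : ℕ, n ≠ m → f n m ∈ Set.Icc (0 : ℝ) 1)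
    (hfg : ∀ n m : ℕ, n ≠ m → |g n m - f n m| ≤ c) (x : ℓ2) :
    fnorm α δ g x ≤ fnorm α δ f x + δ * c * ‖x‖ := by
  apply csSup_le ⟨‖x‖, Or.inl rfl⟩
  rintro y (rfl | ⟨n, m, hnm, rfl⟩)
  · have hx : ‖x‖ ≤ fnorm α δ f x := norm_le_fnorm hf x
    have hslack : 0 ≤ δ * c * ‖x‖ := by positivity
    linarith
  · have hfterm : (√2)⁻¹ * (α + δ * f n m) * |x n + x m| ≤ fnorm α δ f x :=
      le_csSup (fnormSet_bddAbove hf x) (Or.inr ⟨n, m, hnm, rfl⟩)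
    have hdiff : δ * (g n m - f n m) * ((√2)⁻¹ * |x n + x m|) ≤ δ * c * ‖x‖ := by
      gcongr
      · exact (abs_le.mp (hfg n m hnm)).2
      · exact inv_sqrt_two_mul_abs_add_apply_le x hnm
    have hsplit : (√2)⁻¹ * (α + δ * g n m) * |x n + x m| = (√2)⁻¹ * (α + δ * f n m) *
        |x n + x m| + δ * (g n m - f n m) * ((√2)⁻¹ * |x n + x m|) := by ring
    linarith

lemma fnormSet_eq_of_apply_equiv (π : ℕ ≃ ℕ) {x y : ℓ2} (hnorm : ‖y‖ = ‖x‖)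
    (hyx : ∀ k, y (π k) = x k) :
    fnormSet α δ g y = fnormSet α δ (fun n m => g (π n) (π m)) x := by
  have hpairs : ∀ r : ℝ, (∃ n m : ℕ, n ≠ m ∧ r = (√2)⁻¹ * (α + δ * g n m) * |y n + y m|) ↔
      ∃ n m : ℕ, n ≠ m ∧ r = (√2)⁻¹ * (α + δ * g (π n) (π m)) * |x n + x m| := fun r => by
    rw [π.surjective.exists]
    refine exists_congr fun n => ?_
    rw [π.surjective.exists]
    simp only [π.injective.ne_iff, hyx]
  ext r
  simp only [fnormSet, Set.mem_union, Set.mem_singleton_iff, Set.mem_ofPred_eq, hnorm, hpairs]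

end fnorm

lemma apply_map_of_map_e (π : ℕ ≃ ℕ) (T : ℓ2 →ₗᵢ[ℝ] ℓ2) (hT : ∀ n : ℕ, T (e n) = e (π n))
    (x : ℓ2) (k : ℕ) : T x (π k) = x k := by
  rw [← inner_e_left, ← hT, T.inner_map_map, inner_e_left]

theorem stmt5_general (α δ : ℝ) (hδ : α < α + δ)
    (f g : ℕ → ℕ → ℝ)
    (hf : ∀ n m : ℕ, n ≠ m → f n m ∈ Set.Icc (0 : ℝ) 1)
    (hg : ∀ n m : ℕ, n ≠ m → g n m ∈ Set.Icc (0 : ℝ) 1)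
    (r : ℝ) (hr : 0 < r)
    (π : ℕ ≃ ℕ) (hπ : ∀ n m : ℕ, n ≠ m → |g (π n) (π m) - f n m| ≤ 2 * r)
    (T : ℓ2 →ₗᵢ[ℝ] ℓ2) (hT : ∀ n : ℕ, T (e n) = e (π n)) :
    ∀ x : ℓ2,
      |fnorm α δ g (T x) - fnorm α δ f x| ≤ 2 * δ * r * ‖x‖ ∧
      fnorm α δ g (T x) ≤ (1 + 2 * δ * r) * fnorm α δ f x ∧
      fnorm α δ f x ≤ (1 + 2 * δ * r) * fnorm α δ g (T x) := by
  intro x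
  have hδ0 : 0 ≤ δ := by linarith
  set g' : ℕ → ℕ → ℝ := fun n m => g (π n) (π m)
  have hg' : ∀ n m : ℕ, n ≠ m → g' n m ∈ Set.Icc (0 : ℝ) 1 :=
    fun n m h => hg _ _ (π.injective.ne h)
  have hTx : fnorm α δ g (T x) = fnorm α δ g' x := by
    rw [fnorm, fnorm, fnormSet_eq_of_apply_equiv π (T.norm_map x) (apply_map_of_map_e π T hT x)]
  have hup := fnorm_le_fnorm_add (α := α) hδ0 (c := 2 * r) (by positivity) hf hπ x
  have hdown := fnorm_le_fnorm_add (α := α) hδ0 (c := 2 * r) (by positivity) hg'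
    (fun n m h => by rw [abs_sub_comm]; exact hπ n m h) x
  have hxf : 2 * δ * r * ‖x‖ ≤ 2 * δ * r * fnorm α δ f x := by
    gcongr; exact norm_le_fnorm hf x
  have hxg : 2 * δ * r * ‖x‖ ≤ 2 * δ * r * fnorm α δ g' x := by
    gcongr; exact norm_le_fnorm hg' x
  rw [hTx]
  refine ⟨abs_sub_le_iff.mpr ⟨by linarith, by linarith⟩, by linarith, by linarith⟩

theorem stmt5 (α δ : ℝ) (hα : 1 < α) (hδ : α < α + δ) (hαδ : α + δ ≤ 200 / 199)
    (f g : ℕ → ℕ → ℝ)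
    (hfsymm : ∀ n m, f n m = f m n) (hgsymm : ∀ n m, g n m = g m n)
    (hf : ∀ n m : ℕ, n ≠ m → f n m ∈ Set.Icc (0 : ℝ) 1)
    (hg : ∀ n m : ℕ, n ≠ m → g n m ∈ Set.Icc (0 : ℝ) 1)
    (r : ℝ) (hr : 0 < r)
    (π : ℕ ≃ ℕ) (hπ : ∀ n m : ℕ, n ≠ m → |g (π n) (π m) - f n m| ≤ 2 * r)
    (T : ℓ2 →ₗᵢ[ℝ] ℓ2) (hT : ∀ n : ℕ, T (e n) = e (π n)) :
    ∀ x : ℓ2,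
      |fnorm α δ g (T x) - fnorm α δ f x| ≤ 2 * δ * r * ‖x‖ ∧
      fnorm α δ g (T x) ≤ (1 + 2 * δ * r) * fnorm α δ f x ∧
      fnorm α δ f x ≤ (1 + 2 * δ * r) * fnorm α δ g (T x) :=
  stmt5_general α δ hδ f g hf hg r hr π hπ T hT
end
end

section
/- Let X and Y be separable real Banach spaces, let (e_n)_{n∈ℕ} be a linearly independent sequence whose linear span is dense in X, let (f_n)_{n∈ℕ} be a linearly independent sequence whose linear span is dense in Y, and put V = span_ℚ{e_n : n ∈ ℕ} and W = span_ℚ{f_n : n ∈ ℕ}. Let T : X → Y be an isomorphism and let v₁, …, v_n, v ∈ V be such that T v_j ∈ W for 1 ≤ j ≤ n. Then, given η > 0, there is an isomorphism S : X → Y such that ‖S − T‖ ≤ η and ‖S⁻¹ − T⁻¹‖ ≤ η, S v_j = T v_j for 1 ≤ j ≤ n, and S v ∈ W. -/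
/-!
If `v₀` lies in the real span of the `v j`, it already lies in their rational span: the `e n` are
linearly independent over `ℝ`, so a rational linear system with a real solution has a rational one.
Then `S = T` works. Otherwise some continuous functional `φ` vanishes on the `v j` with `φ v₀ = 1`,
and `S = T + φ ⊗ (w - T v₀)`, with `w ∈ W` close to `T v₀` (the rational span is dense), fixes the
`v j`, sends `v₀` to `w`, and is a small perturbation of `T`, hence (Neumann series) an isomorphism
whose inverse is close to `T⁻¹`.
-/

open Submodule Set

theorem LinearIndependent.mem_span_of_mem_span_of_isScalarTower {K L M ι ι' : Type*}
    [Field K] [Field L] [Algebra K L] [AddCommGroup M] [Module K M] [Module L M]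
    [IsScalarTower K L M] {e : ι → M} (he : LinearIndependent L e) {v : ι' → M} {x : M}
    (hv : ∀ j, v j ∈ span K (range e)) (hx : x ∈ span K (range e))
    (hxv : x ∈ span L (range v)) : x ∈ span K (range v) := by
  by_contra hxv'
  -- a `K`-functional separating `x` from the `v j` extends `L`-linearly along the `L`-basis `e`
  obtain ⟨φ, hφx, hφv⟩ := exists_le_ker_of_notMem hxv'
  obtain ⟨Φ, hΦ⟩ := LinearMap.exists_extend
    ((Module.Basis.span he).constr L fun i => algebraMap K L (φ (e i)))
  have hΦe (i : ι) : Φ (e i) = algebraMap K L (φ (e i)) := by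
    have := congr($hΦ (Module.Basis.span he i))
    rwa [Module.Basis.constr_basis, LinearMap.comp_apply, Module.Basis.span_apply] at this
  have hΦφ : ∀ y ∈ span K (range e), Φ y = algebraMap K L (φ y) := by
    intro y hy
    induction hy using span_induction with
    | mem y hy => obtain ⟨i, rfl⟩ := hy; exact hΦe i
    | zero => simp
    | add y z _ _ hy hz => simp [hy, hz]
    | smul k y _ hy =>
      rw [map_smul φ, ← algebraMap_smul L k y, map_smul Φ, hy, smul_eq_mul, smul_eq_mul, map_mul]
  have hΦv : span L (range v) ≤ LinearMap.ker Φ := by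
    rw [span_le]
    rintro _ ⟨j, rfl⟩
    simpa [hΦφ _ (hv j)] using hφv (subset_span (mem_range_self j))
  exact hφx (by simpa [hΦφ x hx] using hΦv hxv)

theorem Submodule.span_subset_closure_span_of_denseRange {K L M : Type*} [Field K] [Field L]
    [Algebra K L] [TopologicalSpace L] [AddCommGroup M] [TopologicalSpace M] [Module K M]
    [Module L M] [IsScalarTower K L M] [ContinuousAdd M] [ContinuousSMul L M]
    (hK : DenseRange (algebraMap K L)) (s : Set M) :
    (span L s : Set M) ⊆ closure (span K s) := by
  intro x hx
  induction hx using span_induction with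
  | mem x hx => exact subset_closure (subset_span hx)
  | zero => exact subset_closure (zero_mem _)
  | add x y _ _ hx hy =>
    exact map_mem_closure₂ continuous_add hx hy fun _ ha _ hb => add_mem ha hb
  | smul a x _ hx =>
    refine map_mem_closure₂ continuous_smul (hK a) hx ?_
    rintro _ ⟨k, rfl⟩ y hy
    rw [algebraMap_smul]
    exact smul_mem _ k hy

theorem setOf_exists_sum_ratCast_smul_eq_span {ι M : Type*} [AddCommGroup M] [Module ℝ M]
    [Module ℚ M] (f : ι → M) :
    {x : M | ∃ (s : Finset ι) (c : ι → ℚ), x = ∑ i ∈ s, (c i : ℝ) • f i} = span ℚ (range f) := by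
  ext x
  constructor
  · rintro ⟨s, c, rfl⟩
    simp_rw [Rat.cast_smul_eq_qsmul]
    exact sum_mem fun i _ => smul_mem _ _ (subset_span (mem_range_self i))
  · intro hx
    obtain ⟨c, rfl⟩ := Finsupp.mem_span_range_iff_exists_finsupp.mp hx
    exact ⟨c.support, c, by simp_rw [Rat.cast_smul_eq_qsmul]; rfl⟩

theorem Submodule.exists_dual_eq_one_of_notMem {X : Type*} [NormedAddCommGroup X]
    [NormedSpace ℝ X] {K : Submodule ℝ X} (hK : IsClosed (K : Set X)) {x : X} (hx : x ∉ K) :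
    ∃ φ : StrongDual ℝ X, φ x = 1 ∧ ∀ y ∈ K, φ y = 0 := by
  obtain ⟨ψ, u, hψK, hψx⟩ := geometric_hahn_banach_closed_point K.convex hK hx
  have hψ : ∀ y ∈ K, ψ y = 0 := by
    intro y hy
    by_contra hne
    have := hψK (((u + 1) / ψ y) • y) (K.smul_mem _ hy)
    rw [map_smul, smul_eq_mul, div_mul_cancel₀ _ hne] at this
    linarith
  have hψx' : ψ x ≠ 0 := by
    have := hψK 0 K.zero_mem
    rw [map_zero] at this
    linarith
  refine ⟨(ψ x)⁻¹ • ψ, by simp [hψx'], fun y hy => ?_⟩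
  simp [hψ y hy]

namespace ContinuousLinearEquiv

variable {𝕜 X Y : Type*} [NontriviallyNormedField 𝕜] [NormedAddCommGroup X] [NormedSpace 𝕜 X]
  [NormedAddCommGroup Y] [NormedSpace 𝕜 Y]

theorem norm_symm_sub_symm_le (S T : X ≃L[𝕜] Y)
    (h : ‖(T.symm : Y →L[𝕜] X)‖ * ‖(S : X →L[𝕜] Y) - T‖ ≤ 1 / 2) :
    ‖(S.symm : Y →L[𝕜] X) - T.symm‖ ≤
      2 * ‖(T.symm : Y →L[𝕜] X)‖ ^ 2 * ‖(S : X →L[𝕜] Y) - T‖ := by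
  set c := ‖(T.symm : Y →L[𝕜] X)‖
  set d := ‖(S : X →L[𝕜] Y) - T‖
  have hdiff (y : Y) : ‖S.symm y - T.symm y‖ ≤ c * d * ‖S.symm y‖ := by
    have : S.symm y - T.symm y = T.symm (((T : X →L[𝕜] Y) - S) (S.symm y)) := by simp
    calc ‖S.symm y - T.symm y‖ ≤ c * ‖((T : X →L[𝕜] Y) - S) (S.symm y)‖ :=
          this ▸ (T.symm : Y →L[𝕜] X).le_opNorm _
      _ ≤ c * (d * ‖S.symm y‖) := by
          gcongr
          exact (ContinuousLinearMap.le_opNorm _ _).trans_eq (by rw [norm_sub_rev])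
      _ = c * d * ‖S.symm y‖ := by ring
  refine ContinuousLinearMap.opNorm_le_bound _ (by positivity) fun y => ?_
  have hSy : ‖S.symm y‖ ≤ 2 * c * ‖y‖ := by
    have hT : ‖T.symm y‖ ≤ c * ‖y‖ := (T.symm : Y →L[𝕜] X).le_opNorm y
    nlinarith [norm_le_insert' (S.symm y) (T.symm y), hdiff y,
      mul_le_mul_of_nonneg_right h (norm_nonneg (S.symm y))]
  calc ‖((S.symm : Y →L[𝕜] X) - T.symm) y‖ ≤ c * d * ‖S.symm y‖ := hdiff y
    _ ≤ c * d * (2 * c * ‖y‖) := by gcongr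
    _ = 2 * c ^ 2 * d * ‖y‖ := by ring

theorem exists_coe_eq_add [CompleteSpace X] (T : X ≃L[𝕜] Y) (g : X →L[𝕜] Y)
    (hg : ‖(T.symm : Y →L[𝕜] X)‖ * ‖g‖ < 1) :
    ∃ S : X ≃L[𝕜] Y, (S : X →L[𝕜] Y) = T + g := by
  have h : ‖-((T.symm : Y →L[𝕜] X).comp g)‖ < 1 :=
    (norm_neg _).trans_le (ContinuousLinearMap.opNorm_comp_le _ _) |>.trans_lt hg
  refine ⟨(unitsEquiv 𝕜 X (Units.oneSub _ h)).trans T, ?_⟩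
  ext x
  simp [Units.val_oneSub]

theorem exists_pos_forall_norm_le_exists_coe_eq_add [CompleteSpace X] (T : X ≃L[𝕜] Y) {η : ℝ}
    (hη : 0 < η) :
    ∃ δ > 0, ∀ g : X →L[𝕜] Y, ‖g‖ ≤ δ →
      ∃ S : X ≃L[𝕜] Y, (S : X →L[𝕜] Y) = T + g ∧ ‖(S.symm : Y →L[𝕜] X) - T.symm‖ ≤ η := by
  set c := ‖(T.symm : Y →L[𝕜] X)‖
  have hc : 0 ≤ c := norm_nonneg _
  refine ⟨min (1 / (2 * (c + 1))) (η / (2 * (c + 1) ^ 2)), by positivity, fun g hg => ?_⟩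
  have hcg : c * ‖g‖ ≤ 1 / 2 := calc
    c * ‖g‖ ≤ (c + 1) * (1 / (2 * (c + 1))) := by
      gcongr
      · linarith
      · exact hg.trans (min_le_left _ _)
    _ = 1 / 2 := by field_simp
  obtain ⟨S, hS⟩ := T.exists_coe_eq_add g (hcg.trans_lt (by norm_num))
  have hST : (S : X →L[𝕜] Y) - T = g := by rw [hS, add_sub_cancel_left]
  refine ⟨S, hS, (S.norm_symm_sub_symm_le T (hST ▸ hcg)).trans ?_⟩
  calc 2 * c ^ 2 * ‖(S : X →L[𝕜] Y) - T‖ ≤ 2 * (c + 1) ^ 2 * (η / (2 * (c + 1) ^ 2)) := by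
        rw [hST]
        gcongr
        · linarith
        · exact hg.trans (min_le_right _ _)
    _ = η := by field_simp

theorem exists_near_apply_mem_of_dense [CompleteSpace X] (T : X ≃L[𝕜] Y) {W : Set Y}
    (hW : Dense W) (φ : StrongDual 𝕜 X) {x₀ : X} (hx₀ : φ x₀ = 1) {η : ℝ} (hη : 0 < η) :
    ∃ S : X ≃L[𝕜] Y, ‖(S : X →L[𝕜] Y) - T‖ ≤ η ∧ ‖(S.symm : Y →L[𝕜] X) - T.symm‖ ≤ η ∧
      (∀ x, φ x = 0 → S x = T x) ∧ S x₀ ∈ W := by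
  obtain ⟨δ, hδ, hT⟩ := T.exists_pos_forall_norm_le_exists_coe_eq_add hη
  set ε := min δ η
  have hφ : 0 < ‖φ‖ + 1 := by positivity
  obtain ⟨w, hwW, hw⟩ := hW.exists_dist_lt (T x₀) (div_pos (lt_min hδ hη) hφ)
  set g := φ.smulRight (w - T x₀)
  have hg : ‖g‖ ≤ ε := calc
    ‖g‖ = ‖φ‖ * ‖w - T x₀‖ := φ.norm_smulRight_apply _
    _ ≤ (‖φ‖ + 1) * (ε / (‖φ‖ + 1)) := by
      rw [← dist_eq_norm, dist_comm]
      gcongr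
      linarith
    _ = ε := by field_simp
  obtain ⟨S, hSg, hSsymm⟩ := hT g (hg.trans (min_le_left _ _))
  have hS (x : X) : S x = T x + φ x • (w - T x₀) := congr($hSg x)
  refine ⟨S, ?_, hSsymm, fun x hx => by simp [hS, hx], by simpa [hS, hx₀] using hwW⟩
  rw [hSg, add_sub_cancel_left]
  exact hg.trans (min_le_right _ _)

end ContinuousLinearEquiv

theorem stmt7_general (X Y : Type*)
    [NormedAddCommGroup X] [NormedSpace ℝ X] [CompleteSpace X]
    [NormedAddCommGroup Y] [NormedSpace ℝ Y]
    (e : ℕ → X) (f : ℕ → Y)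
    (he : LinearIndependent ℝ e)
    (hdf : Dense ((Submodule.span ℝ (Set.range f) : Submodule ℝ Y) : Set Y))
    (V : Set X)
    (hV : V = {x : X | ∃ (s : Finset ℕ) (c : ℕ → ℚ), x = ∑ i ∈ s, (c i : ℝ) • e i})
    (W : Set Y)
    (hW : W = {y : Y | ∃ (s : Finset ℕ) (c : ℕ → ℚ), y = ∑ i ∈ s, (c i : ℝ) • f i})
    (T : X ≃L[ℝ] Y) (n : ℕ) (v : Fin n → X) (hv : ∀ j, v j ∈ V)
    (hTv : ∀ j, T (v j) ∈ W)
    (v₀ : X) (hv₀ : v₀ ∈ V)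
    (η : ℝ) (hη : 0 < η) :
    ∃ S : X ≃L[ℝ] Y,
      ‖(S : X →L[ℝ] Y) - (T : X →L[ℝ] Y)‖ ≤ η ∧
      ‖(S.symm : Y →L[ℝ] X) - (T.symm : Y →L[ℝ] X)‖ ≤ η ∧
      (∀ j, S (v j) = T (v j)) ∧
      S v₀ ∈ W := by
  let _ : Module ℚ X := Module.compHom X (algebraMap ℚ ℝ)
  let _ : Module ℚ Y := Module.compHom Y (algebraMap ℚ ℝ)
  rw [setOf_exists_sum_ratCast_smul_eq_span] at hV hW
  subst hV hW
  by_cases hv₀v : v₀ ∈ span ℝ (range v)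
  · have hTv₀ : span ℚ (range v) ≤ (span ℚ (range f)).comap ((T : X →ₗ[ℝ] Y).restrictScalars ℚ) :=
      span_le.mpr (range_subset_iff.mpr hTv)
    exact ⟨T, by simpa using hη.le, by simpa using hη.le, fun _ => rfl,
      hTv₀ (he.mem_span_of_mem_span_of_isScalarTower hv hv₀ hv₀v)⟩
  · have : FiniteDimensional ℝ (span ℝ (range v)) := .span_of_finite ℝ (finite_range v)
    obtain ⟨φ, hφv₀, hφv⟩ := exists_dual_eq_one_of_notMem (closed_of_finiteDimensional _) hv₀v
    have hW : Dense (span ℚ (range f) : Set Y) :=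
      (hdf.mono (span_subset_closure_span_of_denseRange Rat.denseRange_cast _)).of_closure
    obtain ⟨S, hST, hSTsymm, hSφ, hSv₀⟩ := T.exists_near_apply_mem_of_dense hW φ hφv₀ hη
    exact ⟨S, hST, hSTsymm, fun j => hSφ _ (hφv _ (subset_span (mem_range_self j))), hSv₀⟩

theorem stmt7 (X Y : Type*)
    [NormedAddCommGroup X] [NormedSpace ℝ X] [CompleteSpace X]
    [TopologicalSpace.SeparableSpace X]
    [NormedAddCommGroup Y] [NormedSpace ℝ Y] [CompleteSpace Y]
    [TopologicalSpace.SeparableSpace Y]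
    (e : ℕ → X) (f : ℕ → Y)
    (he : LinearIndependent ℝ e) (hf : LinearIndependent ℝ f)
    (hde : Dense ((Submodule.span ℝ (Set.range e) : Submodule ℝ X) : Set X))
    (hdf : Dense ((Submodule.span ℝ (Set.range f) : Submodule ℝ Y) : Set Y))
    (V : Set X)
    (hV : V = {x : X | ∃ (s : Finset ℕ) (c : ℕ → ℚ), x = ∑ i ∈ s, (c i : ℝ) • e i})
    (W : Set Y)
    (hW : W = {y : Y | ∃ (s : Finset ℕ) (c : ℕ → ℚ), y = ∑ i ∈ s, (c i : ℝ) • f i})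
    (T : X ≃L[ℝ] Y) (n : ℕ) (v : Fin n → X) (hv : ∀ j, v j ∈ V)
    (hTv : ∀ j, T (v j) ∈ W)
    (v₀ : X) (hv₀ : v₀ ∈ V)
    (η : ℝ) (hη : 0 < η) :
    ∃ S : X ≃L[ℝ] Y,
      ‖(S : X →L[ℝ] Y) - (T : X →L[ℝ] Y)‖ ≤ η ∧
      ‖(S.symm : Y →L[ℝ] X) - (T.symm : Y →L[ℝ] X)‖ ≤ η ∧
      (∀ j, S (v j) = T (v j)) ∧
      S v₀ ∈ W :=
  stmt7_general X Y e f he hdf V hV W hW T n v hv hTv v₀ hv₀ η hη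
end

section
/- Let X and Y be real Banach spaces, let E ⊆ X and F ⊆ Y be dense ℚ-homogeneous subsets, and let ε > 0. Suppose there exist a real Banach space Z and linear isometric embeddings ι_X : X → Z and ι_Y : Y → Z such that the Hausdorff distance in Z between ι_X(B_X) and ι_Y(B_Y) is less than ε, where B_X and B_Y denote the closed unit balls of X and Y. Then there exist δ ∈ (0, ε) and a ℚ-homogeneous correspondence ℛ ⊆ E × F such that: for every x ∈ E there is y ∈ F with x ℛ y and ‖y‖_Y ≤ ‖x‖_X; for every y ∈ F there is x ∈ E with x ℛ y and ‖x‖_X ≤ ‖y‖_Y; and |‖Σ_{i≤n} x_i‖_X − ‖Σ_{i≤n} y_i‖_Y| ≤ (ε−δ)·Σ_{i≤n} max{‖x_i‖_X, ‖y_i‖_Y} for all finite families (x_i)_{i≤n} in E and (y_i)_{i≤n} in F with x_i ℛ y_i for each i. -/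
/- Context: a subset A of a real vector space is ℚ-homogeneous if qa ∈ A for every a ∈ A
and rational q.  A correspondence between A and B is a relation ℛ ⊆ A × B such that every
a ∈ A is related to some b ∈ B and vice versa; it is ℚ-homogeneous if x ℛ y implies
(qx) ℛ (qy) for every rational q. -/

open Metric

lemma stmt8_key {X Y Z : Type} [NormedAddCommGroup X] [NormedSpace ℝ X]
    [NormedAddCommGroup Y] [NormedSpace ℝ Y]
    [NormedAddCommGroup Z] [NormedSpace ℝ Z]
    (ιX : X →ₗᵢ[ℝ] Z) (ιY : Y →ₗᵢ[ℝ] Z)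
    (F : Set Y) (hFd : Dense F)
    (d δ : ℝ) (hδ : 0 < δ) (hd : 0 ≤ d)
    (hdist : Metric.hausdorffDist (ιX '' Metric.closedBall 0 1) (ιY '' Metric.closedBall 0 1) ≤ d)
    (x : X) (hx : x ≠ 0) :
    ∃ y ∈ F, ‖y‖ ≤ ‖x‖ ∧ ‖ιX x - ιY y‖ ≤ (d + δ) * ‖x‖ := by
  have hxn : (0:ℝ) < ‖x‖ := norm_pos_iff.mpr hx
  set η := min (δ/3) 1 with hη
  have hη0 : 0 < η := lt_min (by linarith) one_pos
  have hη1 : η ≤ 1 := min_le_right _ _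
  have hηδ : η ≤ δ/3 := min_le_left _ _
  -- finiteness of Hausdorff edist
  have hfin : EMetric.hausdorffEdist (ιX '' Metric.closedBall 0 1) (ιY '' Metric.closedBall 0 1) ≠ ⊤ := by
    apply Metric.hausdorffEdist_ne_top_of_nonempty_of_bounded
    · exact ⟨ιX 0, ⟨0, by simp, rfl⟩⟩
    · exact ⟨ιY 0, ⟨0, by simp, rfl⟩⟩
    · exact (ιX.isometry.lipschitz.isBounded_image Metric.isBounded_closedBall)
    · exact (ιY.isometry.lipschitz.isBounded_image Metric.isBounded_closedBall)
  set u : X := ‖x‖⁻¹ • x with hu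
  have hun : ‖u‖ = 1 := by
    rw [hu, norm_smul, norm_inv, norm_norm, inv_mul_cancel₀ (ne_of_gt hxn)]
  have humem : ιX u ∈ ιX '' Metric.closedBall 0 1 :=
    ⟨u, by simp [hun], rfl⟩
  obtain ⟨z, hz, hdz⟩ := Metric.exists_dist_lt_of_hausdorffDist_lt (r := d + δ/3) humem
    (lt_of_le_of_lt hdist (by linarith)) hfin
  obtain ⟨b, hb, rfl⟩ := hz
  have hbn : ‖b‖ ≤ 1 := by simpa using hb
  -- scale up
  have h1 : ‖ιX x - ιY (‖x‖ • b)‖ ≤ (d + δ/3) * ‖x‖ := by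
    have : ιX x - ιY (‖x‖ • b) = ‖x‖ • (ιX u - ιY b) := by
      simp only [hu, map_smul, smul_sub, smul_smul, mul_inv_cancel₀ (ne_of_gt hxn), one_smul]
    rw [this, norm_smul, Real.norm_eq_abs, abs_of_pos hxn, mul_comm]
    have := hdz.le
    rw [dist_eq_norm] at this
    nlinarith [norm_nonneg b, norm_nonneg (ιX u - ιY b)]
  set y₁ : Y := (1 - η/2) • (‖x‖ • b) with hy₁
  have hy₁n : ‖y₁‖ ≤ (1 - η/2) * ‖x‖ := by
    rw [hy₁, norm_smul, norm_smul, Real.norm_eq_abs, Real.norm_eq_abs,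
      abs_of_nonneg (by linarith : (0:ℝ) ≤ 1 - η/2), abs_of_pos hxn]
    nlinarith [mul_nonneg (mul_nonneg (by linarith : (0:ℝ) ≤ 1 - η/2) hxn.le) (by linarith : (0:ℝ) ≤ 1 - ‖b‖)]
  have h2 : ‖ιX x - ιY y₁‖ ≤ (d + δ/3 + η/2) * ‖x‖ := by
    have : ιX x - ιY y₁ = (ιX x - ιY (‖x‖ • b)) + (η/2) • ιY (‖x‖ • b) := by
      rw [hy₁, map_smul, sub_smul, one_smul]; abel
    rw [this]
    have h3 : ‖(η/2) • ιY (‖x‖ • b)‖ ≤ (η/2) * ‖x‖ := by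
      rw [norm_smul, Real.norm_eq_abs, abs_of_pos (by linarith : (0:ℝ) < η/2)]
      have : ‖ιY (‖x‖ • b)‖ ≤ ‖x‖ := by
        rw [ιY.norm_map, norm_smul, Real.norm_eq_abs, abs_of_pos hxn]
        nlinarith [norm_nonneg b]
      nlinarith [norm_nonneg (ιY (‖x‖ • b))]
    calc ‖_ + _‖ ≤ _ := norm_add_le _ _
      _ ≤ (d + δ/3) * ‖x‖ + (η/2) * ‖x‖ := add_le_add h1 h3
      _ = (d + δ/3 + η/2) * ‖x‖ := by ring
  -- density
  have hmem : y₁ ∈ closure F := hFd y₁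
  rw [Metric.mem_closure_iff] at hmem
  obtain ⟨y, hyF, hyd⟩ := hmem ((η/2) * ‖x‖) (by positivity)
  refine ⟨y, hyF, ?_, ?_⟩
  · have := hyd.le
    rw [dist_comm, dist_eq_norm] at this
    have := norm_le_norm_add_norm_sub' y y₁
    nlinarith
  · have h4 : ‖ιY y₁ - ιY y‖ ≤ (η/2) * ‖x‖ := by
      rw [← map_sub, ιY.norm_map, ← dist_eq_norm]
      exact hyd.le
    calc ‖ιX x - ιY y‖ = ‖(ιX x - ιY y₁) + (ιY y₁ - ιY y)‖ := by abel_nf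
      _ ≤ ‖ιX x - ιY y₁‖ + ‖ιY y₁ - ιY y‖ := norm_add_le _ _
      _ ≤ (d + δ/3 + η/2) * ‖x‖ + (η/2) * ‖x‖ := add_le_add h2 h4
      _ ≤ (d + δ) * ‖x‖ := by nlinarith

theorem stmt8 (X Y : Type)
    [NormedAddCommGroup X] [NormedSpace ℝ X] [CompleteSpace X]
    [NormedAddCommGroup Y] [NormedSpace ℝ Y] [CompleteSpace Y]
    (E : Set X) (F : Set Y) (hEd : Dense E) (hFd : Dense F)
    (hEh : ∀ x ∈ E, ∀ q : ℚ, (q : ℝ) • x ∈ E)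
    (hFh : ∀ y ∈ F, ∀ q : ℚ, (q : ℝ) • y ∈ F)
    (ε : ℝ) (hε : 0 < ε)
    (h : ∃ (Z : Type) (_ : NormedAddCommGroup Z) (_ : NormedSpace ℝ Z)
        (_ : CompleteSpace Z) (ιX : X →ₗᵢ[ℝ] Z) (ιY : Y →ₗᵢ[ℝ] Z),
        Metric.hausdorffDist (ιX '' Metric.closedBall 0 1) (ιY '' Metric.closedBall 0 1) < ε) :
    ∃ δ ∈ Set.Ioo (0 : ℝ) ε, ∃ R : X → Y → Prop,
      (∀ x y, R x y → x ∈ E ∧ y ∈ F) ∧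
      (∀ x y, R x y → ∀ q : ℚ, R ((q : ℝ) • x) ((q : ℝ) • y)) ∧
      (∀ x ∈ E, ∃ y ∈ F, R x y ∧ ‖y‖ ≤ ‖x‖) ∧
      (∀ y ∈ F, ∃ x ∈ E, R x y ∧ ‖x‖ ≤ ‖y‖) ∧
      (∀ (N : ℕ) (x : Fin N → X) (y : Fin N → Y), (∀ i, R (x i) (y i)) →
        |‖∑ i, x i‖ - ‖∑ i, y i‖| ≤ (ε - δ) * ∑ i, max ‖x i‖ ‖y i‖) := by
  obtain ⟨Z, _, _, _, ιX, ιY, hZ⟩ := h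
  set d := Metric.hausdorffDist (ιX '' Metric.closedBall 0 1) (ιY '' Metric.closedBall 0 1)
    with hdDef
  have hd0 : 0 ≤ d := Metric.hausdorffDist_nonneg
  set δ := (ε - d) / 2 with hδDef
  have hδ0 : 0 < δ := by simp only [hδDef]; linarith
  have hδε : δ < ε := by simp only [hδDef]; linarith
  have hεδ : ε - δ = d + δ := by simp only [hδDef]; ring
  have hεδ0 : 0 ≤ ε - δ := by linarith
  -- 0 ∈ E, 0 ∈ F
  have h0E : (0 : X) ∈ E := by
    obtain ⟨x, hx⟩ := hEd.nonempty
    simpa using hEh x hx 0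
  have h0F : (0 : Y) ∈ F := by
    obtain ⟨y, hy⟩ := hFd.nonempty
    simpa using hFh y hy 0
  refine ⟨δ, ⟨hδ0, hδε⟩,
    fun x y => x ∈ E ∧ y ∈ F ∧ ‖ιX x - ιY y‖ ≤ (ε - δ) * max ‖x‖ ‖y‖,
    fun x y hxy => ⟨hxy.1, hxy.2.1⟩, ?_, ?_, ?_, ?_⟩
  · -- ℚ-homogeneity
    rintro x y ⟨hxE, hyF, hxy⟩ q
    refine ⟨hEh x hxE q, hFh y hyF q, ?_⟩
    have : ιX ((q:ℝ) • x) - ιY ((q:ℝ) • y) = (q:ℝ) • (ιX x - ιY y) := by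
      simp [map_smul, smul_sub]
    rw [this, norm_smul, norm_smul, norm_smul, Real.norm_eq_abs,
      ← mul_max_of_nonneg _ _ (abs_nonneg (q:ℝ)), mul_comm (ε - δ), mul_assoc,
      mul_comm _ (ε - δ)]
    exact mul_le_mul_of_nonneg_left hxy (abs_nonneg _)
  · -- x ∈ E → ∃ y
    intro x hxE
    by_cases hx : x = 0
    · exact ⟨0, h0F, ⟨hxE, h0F, by simp [hx]⟩, by simp [hx]⟩
    · obtain ⟨y, hyF, hy1, hy2⟩ := stmt8_key ιX ιY F hFd d δ hδ0 hd0 le_rfl x hx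
      refine ⟨y, hyF, ⟨hxE, hyF, ?_⟩, hy1⟩
      calc ‖ιX x - ιY y‖ ≤ (d + δ) * ‖x‖ := hy2
        _ ≤ (ε - δ) * max ‖x‖ ‖y‖ := by
            rw [hεδ]
            exact mul_le_mul_of_nonneg_left (le_max_left _ _) (by linarith)
  · -- y ∈ F → ∃ x
    intro y hyF
    by_cases hy : y = 0
    · exact ⟨0, h0E, ⟨h0E, hyF, by simp [hy]⟩, by simp [hy]⟩
    · have hsym : Metric.hausdorffDist (ιY '' Metric.closedBall 0 1)
          (ιX '' Metric.closedBall 0 1) ≤ d := by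
        rw [Metric.hausdorffDist_comm]
      obtain ⟨x, hxE, hx1, hx2⟩ := stmt8_key ιY ιX E hEd d δ hδ0 hd0 hsym y hy
      refine ⟨x, hxE, ⟨hxE, hyF, ?_⟩, hx1⟩
      have : ‖ιX x - ιY y‖ = ‖ιY y - ιX x‖ := norm_sub_rev _ _
      rw [this]
      calc ‖ιY y - ιX x‖ ≤ (d + δ) * ‖y‖ := hx2
        _ ≤ (ε - δ) * max ‖x‖ ‖y‖ := by
            rw [hεδ]
            exact mul_le_mul_of_nonneg_left (le_max_right _ _) (by linarith)
  · -- sum inequality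
    intro N x y hR
    have key : ‖ιX (∑ i, x i) - ιY (∑ i, y i)‖ ≤ (ε - δ) * ∑ i, max ‖x i‖ ‖y i‖ := by
      have heq : ιX (∑ i, x i) - ιY (∑ i, y i) = ∑ i, (ιX (x i) - ιY (y i)) := by
        rw [Finset.sum_sub_distrib, map_sum, map_sum]
      rw [heq, Finset.mul_sum]
      exact le_trans (norm_sum_le _ _) (Finset.sum_le_sum fun i _ => (hR i).2.2)
    calc |‖∑ i, x i‖ - ‖∑ i, y i‖| = |‖ιX (∑ i, x i)‖ - ‖ιY (∑ i, y i)‖| := by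
          rw [ιX.norm_map, ιY.norm_map]
      _ ≤ ‖ιX (∑ i, x i) - ιY (∑ i, y i)‖ := abs_norm_sub_norm_le _ _
      _ ≤ _ := key
end

section
/- Let X and Y be real Banach spaces, let E ⊆ X and F ⊆ Y be dense ℚ-homogeneous subsets, let ε > 0, and suppose there exist δ ∈ (0, ε) and a ℚ-homogeneous correspondence ℛ ⊆ E × F such that: for every x ∈ E there is y ∈ F with x ℛ y and ‖y‖_Y ≤ ‖x‖_X; for every y ∈ F there is x ∈ E with x ℛ y and ‖x‖_X ≤ ‖y‖_Y; and |‖Σ_{i≤n} x_i‖_X − ‖Σ_{i≤n} y_i‖_Y| ≤ (ε−δ)·Σ_{i≤n} max{‖x_i‖_X, ‖y_i‖_Y} for all finite families (x_i)_{i≤n} in E and (y_i)_{i≤n} in F with x_i ℛ y_i for each i. Then there exist a real Banach space Z and linear isometric embeddings ι_X : X → Z and ι_Y : Y → Z such that the Hausdorff distance in Z between ι_X(B_X) and ι_Y(B_Y) is less than ε, where B_X and B_Y denote the closed unit balls of X and Y. -/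
/- Context: a subset A of a real vector space is ℚ-homogeneous if qa ∈ A for every a ∈ A
and rational q.  A correspondence between A and B is a relation ℛ ⊆ A × B such that every
a ∈ A is related to some b ∈ B and vice versa; it is ℚ-homogeneous if x ℛ y implies
(qx) ℛ (qy) for every rational q. -/

/-- Auxiliary type synonym on which we will install a custom seminorm. -/
def Stmt9Pre (X Y : Type) : Type := X × Y

set_option maxHeartbeats 4000000 in
theorem stmt9 (X Y : Type)
    [NormedAddCommGroup X] [NormedSpace ℝ X] [CompleteSpace X]
    [NormedAddCommGroup Y] [NormedSpace ℝ Y] [CompleteSpace Y]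
    (E : Set X) (F : Set Y) (hEd : Dense E) (hFd : Dense F)
    (hEh : ∀ x ∈ E, ∀ q : ℚ, (q : ℝ) • x ∈ E)
    (hFh : ∀ y ∈ F, ∀ q : ℚ, (q : ℝ) • y ∈ F)
    (ε : ℝ) (hε : 0 < ε)
    (δ : ℝ) (hδ : δ ∈ Set.Ioo (0 : ℝ) ε) (R : X → Y → Prop)
    (hRsub : ∀ x y, R x y → x ∈ E ∧ y ∈ F)
    (hRhom : ∀ x y, R x y → ∀ q : ℚ, R ((q : ℝ) • x) ((q : ℝ) • y))
    (hRE : ∀ x ∈ E, ∃ y ∈ F, R x y ∧ ‖y‖ ≤ ‖x‖)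
    (hRF : ∀ y ∈ F, ∃ x ∈ E, R x y ∧ ‖x‖ ≤ ‖y‖)
    (hRnorm : ∀ (N : ℕ) (x : Fin N → X) (y : Fin N → Y), (∀ i, R (x i) (y i)) →
      |‖∑ i, x i‖ - ‖∑ i, y i‖| ≤ (ε - δ) * ∑ i, max ‖x i‖ ‖y i‖) :
    ∃ (Z : Type) (_ : NormedAddCommGroup Z) (_ : NormedSpace ℝ Z)
      (_ : CompleteSpace Z) (ιX : X →ₗᵢ[ℝ] Z) (ιY : Y →ₗᵢ[ℝ] Z),
      Metric.hausdorffDist (ιX '' Metric.closedBall 0 1) (ιY '' Metric.closedBall 0 1) < ε := by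
  classical
  obtain ⟨hδ0, hδε⟩ := hδ
  set c : ℝ := ε - δ / 2 with hc
  have hc0 : 0 < c := by simp only [hc]; linarith
  have hεδc : ε - δ ≤ c := by simp only [hc]; linarith
  -- the set of admissible values for the seminorm
  set S : X × Y → Set ℝ := fun z =>
    { r | ∃ (N : ℕ) (a : Fin N → X) (b : Fin N → Y), (∀ i, R (a i) (b i)) ∧
        r = ‖z.1 - ∑ i, a i‖ + ‖z.2 + ∑ i, b i‖ + c * ∑ i, max ‖a i‖ ‖b i‖ } with hSdef
  set ν : X × Y → ℝ := fun z => sInf (S z) with hνdef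
  have hmax_nonneg : ∀ (N : ℕ) (a : Fin N → X) (b : Fin N → Y),
      (0 : ℝ) ≤ ∑ i, max ‖a i‖ ‖b i‖ := by
    intro N a b
    exact Finset.sum_nonneg fun i _ => le_trans (norm_nonneg _) (le_max_left _ _)
  have hmem_triv : ∀ z : X × Y, ‖z.1‖ + ‖z.2‖ ∈ S z := by
    intro z
    refine ⟨0, fun i => i.elim0, fun i => i.elim0, fun i => i.elim0, ?_⟩
    simp
  have hS_nonneg : ∀ z : X × Y, ∀ r ∈ S z, (0 : ℝ) ≤ r := by
    rintro z r ⟨N, a, b, hab, rfl⟩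
    have := hmax_nonneg N a b
    positivity
  have hbdd : ∀ z : X × Y, BddBelow (S z) := fun z => ⟨0, fun r hr => hS_nonneg z r hr⟩
  have hne : ∀ z : X × Y, (S z).Nonempty := fun z => ⟨_, hmem_triv z⟩
  have hν_le : ∀ z : X × Y, ν z ≤ ‖z.1‖ + ‖z.2‖ := fun z => csInf_le (hbdd z) (hmem_triv z)
  have hν_nonneg : ∀ z : X × Y, 0 ≤ ν z := fun z => le_csInf (hne z) (hS_nonneg z)
  have hν_zero : ν 0 = 0 := by
    have h1 := hν_le 0
    have h2 := hν_nonneg 0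
    simp only [Prod.fst_zero, Prod.snd_zero, norm_zero, add_zero] at h1
    linarith
  -- the key lower bound
  have h_lb : ∀ z : X × Y, ∀ r ∈ S z, ‖z.1‖ - ‖z.2‖ ≤ r ∧ ‖z.2‖ - ‖z.1‖ ≤ r := by
    rintro z r ⟨N, a, b, hab, rfl⟩
    have hd := hRnorm N a b hab
    set u := ∑ i, a i
    set v := ∑ i, b i
    set Sm : ℝ := ∑ i, max ‖a i‖ ‖b i‖
    have hSm0 : (0 : ℝ) ≤ Sm := hmax_nonneg N a b
    have f1 : ‖z.1‖ - ‖u‖ ≤ ‖z.1 - u‖ := norm_sub_norm_le _ _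
    have f2 : ‖u‖ - ‖z.1‖ ≤ ‖z.1 - u‖ := by
      have := norm_sub_norm_le u z.1
      rwa [norm_sub_rev] at this
    have f3 : ‖z.2‖ ≤ ‖z.2 + v‖ + ‖v‖ := by
      have : z.2 = (z.2 + v) - v := by abel
      calc ‖z.2‖ = ‖(z.2 + v) - v‖ := by rw [← this]
        _ ≤ ‖z.2 + v‖ + ‖v‖ := norm_sub_le _ _
    have f4 : ‖v‖ ≤ ‖z.2 + v‖ + ‖z.2‖ := by
      have : v = (z.2 + v) - z.2 := by abel
      calc ‖v‖ = ‖(z.2 + v) - z.2‖ := by rw [← this]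
        _ ≤ ‖z.2 + v‖ + ‖z.2‖ := norm_sub_le _ _
    have f5 : ‖u‖ - ‖v‖ ≤ (ε - δ) * Sm ∧ ‖v‖ - ‖u‖ ≤ (ε - δ) * Sm := abs_sub_le_iff.mp hd
    have f6 : (ε - δ) * Sm ≤ c * Sm := mul_le_mul_of_nonneg_right hεδc hSm0
    obtain ⟨f5a, f5b⟩ := f5
    constructor <;> linarith
  have hν_fst : ∀ x : X, ν (x, (0 : Y)) = ‖x‖ := by
    intro x
    have h1 : ν (x, (0 : Y)) ≤ ‖x‖ := by
      have := hν_le (x, (0 : Y)); simpa using this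
    have h2 : ‖x‖ ≤ ν (x, (0 : Y)) := by
      refine le_csInf (hne _) fun r hr => ?_
      have := (h_lb (x, (0 : Y)) r hr).1
      simpa using this
    linarith
  have hν_snd : ∀ y : Y, ν ((0 : X), y) = ‖y‖ := by
    intro y
    have h1 : ν ((0 : X), y) ≤ ‖y‖ := by
      have := hν_le ((0 : X), y); simpa using this
    have h2 : ‖y‖ ≤ ν ((0 : X), y) := by
      refine le_csInf (hne _) fun r hr => ?_
      have := (h_lb ((0 : X), y) r hr).2
      simpa using this
    linarith
  -- triangle inequality
  have h_add : ∀ z w : X × Y, ν (z + w) ≤ ν z + ν w := by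
    intro z w
    have key : ∀ r ∈ S z, ∀ s ∈ S w, ν (z + w) ≤ r + s := by
      rintro r ⟨N, a, b, hab, rfl⟩ s ⟨M, a', b', hab', rfl⟩
      set t : ℝ := ‖(z + w).1 - ∑ i, Fin.append a a' i‖ +
        ‖(z + w).2 + ∑ i, Fin.append b b' i‖ +
        c * ∑ i : Fin (N + M), max ‖Fin.append a a' i‖ ‖Fin.append b b' i‖ with ht
      have hmem : t ∈ S (z + w) := by
        refine ⟨N + M, Fin.append a a', Fin.append b b', ?_, rfl⟩
        intro i
        refine Fin.addCases (fun j => ?_) (fun j => ?_) i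
        · simpa [Fin.append_left] using hab j
        · simpa [Fin.append_right] using hab' j
      have hsum1 : ∑ i, Fin.append a a' i = (∑ i, a i) + ∑ i, a' i := by
        rw [Fin.sum_univ_add]
        simp [Fin.append_left, Fin.append_right]
      have hsum2 : ∑ i, Fin.append b b' i = (∑ i, b i) + ∑ i, b' i := by
        rw [Fin.sum_univ_add]
        simp [Fin.append_left, Fin.append_right]
      have hsum3 : ∑ i : Fin (N + M), max ‖Fin.append a a' i‖ ‖Fin.append b b' i‖
          = (∑ i, max ‖a i‖ ‖b i‖) + ∑ i, max ‖a' i‖ ‖b' i‖ := by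
        rw [Fin.sum_univ_add]
        simp [Fin.append_left, Fin.append_right]
      have e1 : ‖(z + w).1 - ∑ i, Fin.append a a' i‖ ≤
          ‖z.1 - ∑ i, a i‖ + ‖w.1 - ∑ i, a' i‖ := by
        rw [hsum1]
        have : (z + w).1 - ((∑ i, a i) + ∑ i, a' i)
            = (z.1 - ∑ i, a i) + (w.1 - ∑ i, a' i) := by
          simp only [Prod.fst_add]; abel
        rw [this]; exact norm_add_le _ _
      have e2 : ‖(z + w).2 + ∑ i, Fin.append b b' i‖ ≤
          ‖z.2 + ∑ i, b i‖ + ‖w.2 + ∑ i, b' i‖ := by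
        rw [hsum2]
        have : (z + w).2 + ((∑ i, b i) + ∑ i, b' i)
            = (z.2 + ∑ i, b i) + (w.2 + ∑ i, b' i) := by
          simp only [Prod.snd_add]; abel
        rw [this]; exact norm_add_le _ _
      have := csInf_le (hbdd (z + w)) hmem
      have e3 : c * ∑ i : Fin (N + M), max ‖Fin.append a a' i‖ ‖Fin.append b b' i‖
          = c * ∑ i, max ‖a i‖ ‖b i‖ + c * ∑ i, max ‖a' i‖ ‖b' i‖ := by
        rw [hsum3, mul_add]
      have htle : t ≤ (‖z.1 - ∑ i, a i‖ + ‖z.2 + ∑ i, b i‖ + c * ∑ i, max ‖a i‖ ‖b i‖)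
          + (‖w.1 - ∑ i, a' i‖ + ‖w.2 + ∑ i, b' i‖ + c * ∑ i, max ‖a' i‖ ‖b' i‖) := by
        rw [ht, e3]; linarith
      linarith
    have step1 : ∀ r ∈ S z, ν (z + w) - ν w ≤ r := by
      intro r hr
      rw [sub_le_iff_le_add]
      have : ν (z + w) - r ≤ ν w := le_csInf (hne w) fun s hs => by
        have := key r hr s hs; linarith
      linarith
    have : ν (z + w) - ν w ≤ ν z := le_csInf (hne z) step1
    linarith
  -- negation
  have h_neg_le : ∀ z : X × Y, ν (-z) ≤ ν z := by
    intro z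
    refine le_csInf (hne z) ?_
    rintro r ⟨N, a, b, hab, rfl⟩
    refine csInf_le (hbdd _) ⟨N, fun i => -a i, fun i => -b i, fun i => ?_, ?_⟩
    · have := hRhom _ _ (hab i) (-1)
      simpa using this
    · have e1 : (-z).1 - ∑ i, -a i = -(z.1 - ∑ i, a i) := by
        simp only [Prod.fst_neg, Finset.sum_neg_distrib]
        abel
      have e2 : (-z).2 + ∑ i, -b i = -(z.2 + ∑ i, b i) := by
        simp only [Prod.snd_neg, Finset.sum_neg_distrib]
        abel
      rw [e1, e2, norm_neg, norm_neg]
      simp [norm_neg]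
  have h_neg : ∀ z : X × Y, ν (-z) = ν z := by
    intro z
    have h1 := h_neg_le z
    have h2 := h_neg_le (-z)
    rw [neg_neg] at h2
    linarith
  -- rational homogeneity
  have hQ_le : ∀ (q : ℚ) (z : X × Y), ν ((q : ℝ) • z) ≤ |(q : ℝ)| * ν z := by
    intro q z
    by_cases hq : (q : ℝ) = 0
    · rw [hq]; simp [hν_zero, hν_nonneg]
    have hqpos : 0 < |(q : ℝ)| := abs_pos.mpr hq
    have key : ∀ r ∈ S z, ν ((q : ℝ) • z) ≤ |(q : ℝ)| * r := by
      rintro r ⟨N, a, b, hab, rfl⟩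
      have hmem : |(q : ℝ)| * (‖z.1 - ∑ i, a i‖ + ‖z.2 + ∑ i, b i‖
          + c * ∑ i, max ‖a i‖ ‖b i‖) ∈ S ((q : ℝ) • z) := by
        refine ⟨N, fun i => (q : ℝ) • a i, fun i => (q : ℝ) • b i,
          fun i => hRhom _ _ (hab i) q, ?_⟩
        have h1 : ∑ i, (q : ℝ) • a i = (q : ℝ) • ∑ i, a i := (Finset.smul_sum).symm
        have h2 : ∑ i, (q : ℝ) • b i = (q : ℝ) • ∑ i, b i := (Finset.smul_sum).symm
        rw [h1, h2]
        have e1 : ((q : ℝ) • z).1 - (q : ℝ) • ∑ i, a i = (q : ℝ) • (z.1 - ∑ i, a i) := by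
          simp only [Prod.smul_fst]; rw [smul_sub]
        have e2 : ((q : ℝ) • z).2 + (q : ℝ) • ∑ i, b i = (q : ℝ) • (z.2 + ∑ i, b i) := by
          simp only [Prod.smul_snd]; rw [smul_add]
        have e3 : ∀ i : Fin N, max ‖(q : ℝ) • a i‖ ‖(q : ℝ) • b i‖
            = |(q : ℝ)| * max ‖a i‖ ‖b i‖ := by
          intro i
          rw [norm_smul, norm_smul, Real.norm_eq_abs,
            mul_max_of_nonneg _ _ (abs_nonneg (q : ℝ))]
        rw [e1, e2, norm_smul, norm_smul, Real.norm_eq_abs]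
        rw [Finset.sum_congr rfl (fun i _ => e3 i), ← Finset.mul_sum]
        ring
      calc ν ((q : ℝ) • z) ≤ _ := csInf_le (hbdd _) hmem
        _ = |(q : ℝ)| * _ := rfl
    have h1 : ν ((q : ℝ) • z) / |(q : ℝ)| ≤ ν z := by
      refine le_csInf (hne z) fun r hr => ?_
      rw [div_le_iff₀ hqpos]
      calc ν ((q : ℝ) • z) ≤ |(q : ℝ)| * r := key r hr
        _ = r * |(q : ℝ)| := mul_comm _ _
    calc ν ((q : ℝ) • z) = ν ((q : ℝ) • z) / |(q : ℝ)| * |(q : ℝ)| := by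
          field_simp
      _ ≤ ν z * |(q : ℝ)| := mul_le_mul_of_nonneg_right h1 (le_of_lt hqpos)
      _ = |(q : ℝ)| * ν z := mul_comm _ _
  have hQ : ∀ (q : ℚ) (z : X × Y), ν ((q : ℝ) • z) = |(q : ℝ)| * ν z := by
    intro q z
    by_cases hq : (q : ℝ) = 0
    · rw [hq]; simp [hν_zero]
    have hq' : q ≠ 0 := by exact_mod_cast hq
    have h1 := hQ_le q z
    have h2 := hQ_le q⁻¹ ((q : ℝ) • z)
    have hc1 : ((q⁻¹ : ℚ) : ℝ) • ((q : ℝ) • z) = z := by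
      rw [smul_smul]
      push_cast
      rw [inv_mul_cancel₀ hq, one_smul]
    rw [hc1] at h2
    have hc2 : |((q⁻¹ : ℚ) : ℝ)| = |(q : ℝ)|⁻¹ := by
      push_cast; rw [abs_inv]
    rw [hc2] at h2
    have hqpos : 0 < |(q : ℝ)| := abs_pos.mpr hq
    have h3 : |(q : ℝ)| * ν z ≤ ν ((q : ℝ) • z) := by
      have := mul_le_mul_of_nonneg_left h2 (le_of_lt hqpos)
      rw [← mul_assoc, mul_inv_cancel₀ (ne_of_gt hqpos), one_mul] at this
      exact this
    linarith
  -- Lipschitz property of ν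
  have h_lip : ∀ z w : X × Y, |ν z - ν w| ≤ ‖z.1 - w.1‖ + ‖z.2 - w.2‖ := by
    intro z w
    have t1 : ν z ≤ ν w + (‖z.1 - w.1‖ + ‖z.2 - w.2‖) := by
      have h := h_add w (z - w)
      rw [add_sub_cancel] at h
      have h2 : ν (z - w) ≤ ‖z.1 - w.1‖ + ‖z.2 - w.2‖ := by
        have := hν_le (z - w)
        simpa using this
      linarith
    have t2 : ν w ≤ ν z + (‖z.1 - w.1‖ + ‖z.2 - w.2‖) := by
      have h := h_add z (w - z)
      rw [add_sub_cancel] at h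
      have h2 : ν (w - z) ≤ ‖w.1 - z.1‖ + ‖w.2 - z.2‖ := by
        have := hν_le (w - z)
        simpa using this
      rw [norm_sub_rev w.1 z.1, norm_sub_rev w.2 z.2] at h2
      linarith
    rw [abs_sub_le_iff]
    constructor <;> linarith
  -- real homogeneity by density of ℚ
  have hR_hom : ∀ (t : ℝ) (z : X × Y), ν (t • z) = |t| * ν z := by
    intro t z
    have hf : Continuous fun s : ℝ => ν (s • z) := by
      have : LipschitzWith (Real.toNNReal (‖z.1‖ + ‖z.2‖)) (fun s : ℝ => ν (s • z)) := by
        refine LipschitzWith.of_dist_le_mul fun s t => ?_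
        rw [Real.dist_eq, Real.dist_eq]
        have h := h_lip (s • z) (t • z)
        have e1 : (s • z).1 - (t • z).1 = (s - t) • z.1 := by
          simp only [Prod.smul_fst]; rw [sub_smul]
        have e2 : (s • z).2 - (t • z).2 = (s - t) • z.2 := by
          simp only [Prod.smul_snd]; rw [sub_smul]
        rw [e1, e2, norm_smul, norm_smul, Real.norm_eq_abs] at h
        have hcoe : (Real.toNNReal (‖z.1‖ + ‖z.2‖) : ℝ) = ‖z.1‖ + ‖z.2‖ :=
          Real.coe_toNNReal _ (by positivity)
        rw [hcoe]
        calc |ν (s • z) - ν (t • z)| ≤ |s - t| * ‖z.1‖ + |s - t| * ‖z.2‖ := h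
          _ = (‖z.1‖ + ‖z.2‖) * |s - t| := by ring
      exact this.continuous
    have hg : Continuous fun s : ℝ => |s| * ν z :=
      (continuous_abs.mul continuous_const)
    have heq : (fun s : ℝ => ν (s • z)) = fun s : ℝ => |s| * ν z := by
      refine Continuous.ext_on Rat.denseRange_cast hf hg ?_
      rintro s ⟨q, rfl⟩
      exact hQ q z
    exact congrFun heq t
  -- install the seminormed structure on the type synonym
  letI : AddCommGroup (Stmt9Pre X Y) := inferInstanceAs (AddCommGroup (X × Y))
  letI : Module ℝ (Stmt9Pre X Y) := inferInstanceAs (Module ℝ (X × Y))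
  let sem : AddGroupSeminorm (Stmt9Pre X Y) :=
    { toFun := fun z => ν z
      map_zero' := hν_zero
      add_le' := fun z w => h_add z w
      neg' := fun z => h_neg z }
  letI : SeminormedAddCommGroup (Stmt9Pre X Y) := sem.toSeminormedAddCommGroup
  have hnorm : ∀ z : Stmt9Pre X Y, ‖z‖ = ν z := fun z => rfl
  letI : NormedSpace ℝ (Stmt9Pre X Y) := by
    refine ⟨fun t z => ?_⟩
    rw [hnorm, hnorm, Real.norm_eq_abs]
    exact le_of_eq (hR_hom t z)
  let Zc := UniformSpace.Completion (Stmt9Pre X Y)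
  letI : NormedAddCommGroup Zc := inferInstanceAs
    (NormedAddCommGroup (UniformSpace.Completion (Stmt9Pre X Y)))
  letI : NormedSpace ℝ Zc := inferInstanceAs
    (NormedSpace ℝ (UniformSpace.Completion (Stmt9Pre X Y)))
  letI : CompleteSpace Zc := inferInstanceAs
    (CompleteSpace (UniformSpace.Completion (Stmt9Pre X Y)))
  -- the embeddings
  let jX : X →ₗ[ℝ] Stmt9Pre X Y :=
    { toFun := fun x => ((x, (0 : Y)) : X × Y)
      map_add' := fun x x' => by
        show ((x + x', (0 : Y)) : X × Y) = (x, (0 : Y)) + (x', (0 : Y))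
        simp [Prod.ext_iff]
      map_smul' := fun t x => by
        show ((t • x, (0 : Y)) : X × Y) = t • ((x, (0 : Y)) : X × Y)
        simp [Prod.ext_iff] }
  let jY : Y →ₗ[ℝ] Stmt9Pre X Y :=
    { toFun := fun y => (((0 : X), y) : X × Y)
      map_add' := fun y y' => by
        show (((0 : X), y + y') : X × Y) = ((0 : X), y) + ((0 : X), y')
        simp [Prod.ext_iff]
      map_smul' := fun t y => by
        show (((0 : X), t • y) : X × Y) = t • (((0 : X), y) : X × Y)
        simp [Prod.ext_iff] }
  let coeL : Stmt9Pre X Y →ₗ[ℝ] Zc :=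
    { toFun := fun z => (z : Zc)
      map_add' := fun z w => UniformSpace.Completion.coe_add z w
      map_smul' := fun t z => UniformSpace.Completion.coe_smul t z }
  have hkeyZ : ∀ w : Stmt9Pre X Y, ‖coeL w‖ = ν w := by
    intro w
    show ‖(w : UniformSpace.Completion (Stmt9Pre X Y))‖ = ν w
    rw [UniformSpace.Completion.norm_coe]
    exact hnorm w
  let ιX : X →ₗᵢ[ℝ] Zc :=
    { toLinearMap := coeL.comp jX
      norm_map' := fun x => by
        rw [LinearMap.comp_apply, hkeyZ]
        exact hν_fst x }
  let ιY : Y →ₗᵢ[ℝ] Zc :=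
    { toLinearMap := coeL.comp jY
      norm_map' := fun y => by
        rw [LinearMap.comp_apply, hkeyZ]
        exact hν_snd y }
  refine ⟨Zc, inferInstance, inferInstance, inferInstance, ιX, ιY, ?_⟩
  -- distance formula
  have hdistXY : ∀ (x : X) (y : Y), dist (ιX x) (ιY y) = ν (x, -y) := by
    intro x y
    have h0 : ιX x - ιY y = coeL (jX x - jY y) := by
      rw [map_sub]; rfl
    rw [dist_eq_norm, h0, hkeyZ]
    have h1 : jX x - jY y = (((x, -y) : X × Y) : Stmt9Pre X Y) := by
      show ((x, (0:Y)) : X × Y) - (((0:X), y) : X × Y) = ((x, -y) : X × Y)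
      simp [Prod.ext_iff]
    rw [h1]
  -- single-pair estimate
  have hsingle : ∀ (x : X) (y : Y), R x y → ν (x, -y) ≤ c * max ‖x‖ ‖y‖ := by
    intro x y hxy
    have hmem : c * max ‖x‖ ‖y‖ ∈ S (x, -y) := by
      refine ⟨1, fun _ => x, fun _ => y, fun _ => hxy, ?_⟩
      simp
    exact csInf_le (hbdd _) hmem
  -- splitting estimates
  have hsplit1 : ∀ (x x' : X) (y : Y), ν (x, -y) ≤ ‖x - x'‖ + ν (x', -y) := by
    intro x x' y
    have hdecomp : ((x, -y) : X × Y) = ((x - x', (0 : Y)) : X × Y) + ((x', -y) : X × Y) := by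
      simp [Prod.ext_iff]
    have h := h_add ((x - x', (0 : Y)) : X × Y) ((x', -y) : X × Y)
    rw [← hdecomp] at h
    have h2 : ν ((x - x', (0 : Y)) : X × Y) = ‖x - x'‖ := hν_fst _
    linarith
  have hsplit2 : ∀ (x : X) (y y' : Y), ν (x, -y) ≤ ν (x, -y') + ‖y' - y‖ := by
    intro x y y'
    have hdecomp : ((x, -y) : X × Y) = ((x, -y') : X × Y) + (((0 : X), y' - y) : X × Y) := by
      simp only [Prod.mk_add_mk, Prod.mk.injEq]
      constructor
      · abel
      · abel
    have h := h_add ((x, -y') : X × Y) (((0 : X), y' - y) : X × Y)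
    rw [← hdecomp] at h
    have h2 : ν (((0 : X), y' - y) : X × Y) = ‖y' - y‖ := hν_snd _
    linarith
  -- approximation within the dense sets, keeping norm ≤ 1
  have happroxE : ∀ x : X, ‖x‖ ≤ 1 → ∃ x' ∈ E, ‖x'‖ ≤ 1 ∧ ‖x - x'‖ ≤ δ / 4 := by
    intro x hx
    set s : ℝ := min (δ / 8) (1 / 2) with hs
    have hs0 : 0 < s := lt_min (by linarith) (by norm_num)
    have hs1 : s ≤ 1 / 2 := min_le_right _ _
    have hsδ : s ≤ δ / 8 := min_le_left _ _
    obtain ⟨x', hx'E, hx'd⟩ := hEd.exists_dist_lt ((1 - s) • x) hs0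
    have hd : ‖(1 - s) • x - x'‖ < s := by rw [← dist_eq_norm]; exact hx'd
    refine ⟨x', hx'E, ?_, ?_⟩
    · have h1 : ‖x'‖ ≤ ‖x' - (1 - s) • x‖ + ‖(1 - s) • x‖ := by
        have : x' = (x' - (1 - s) • x) + (1 - s) • x := by abel
        calc ‖x'‖ = ‖(x' - (1 - s) • x) + (1 - s) • x‖ := by rw [← this]
          _ ≤ _ := norm_add_le _ _
      have h2 : ‖x' - (1 - s) • x‖ < s := by rw [norm_sub_rev]; exact hd
      have h3 : ‖(1 - s) • x‖ ≤ 1 - s := by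
        rw [norm_smul, Real.norm_eq_abs, abs_of_nonneg (by linarith)]
        nlinarith
      linarith
    · have h1 : ‖x - x'‖ ≤ ‖x - (1 - s) • x‖ + ‖(1 - s) • x - x'‖ := by
        have : x - x' = (x - (1 - s) • x) + ((1 - s) • x - x') := by abel
        calc ‖x - x'‖ = ‖(x - (1 - s) • x) + ((1 - s) • x - x')‖ := by rw [← this]
          _ ≤ _ := norm_add_le _ _
      have h2 : x - (1 - s) • x = s • x := by
        rw [sub_smul, one_smul]; abel
      have h3 : ‖x - (1 - s) • x‖ ≤ s := by
        rw [h2, norm_smul, Real.norm_eq_abs, abs_of_nonneg (le_of_lt hs0)]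
        nlinarith
      linarith
  have happroxF : ∀ y : Y, ‖y‖ ≤ 1 → ∃ y' ∈ F, ‖y'‖ ≤ 1 ∧ ‖y - y'‖ ≤ δ / 4 := by
    intro y hy
    set s : ℝ := min (δ / 8) (1 / 2) with hs
    have hs0 : 0 < s := lt_min (by linarith) (by norm_num)
    have hs1 : s ≤ 1 / 2 := min_le_right _ _
    have hsδ : s ≤ δ / 8 := min_le_left _ _
    obtain ⟨y', hy'F, hy'd⟩ := hFd.exists_dist_lt ((1 - s) • y) hs0
    have hd : ‖(1 - s) • y - y'‖ < s := by rw [← dist_eq_norm]; exact hy'd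
    refine ⟨y', hy'F, ?_, ?_⟩
    · have h1 : ‖y'‖ ≤ ‖y' - (1 - s) • y‖ + ‖(1 - s) • y‖ := by
        have : y' = (y' - (1 - s) • y) + (1 - s) • y := by abel
        calc ‖y'‖ = ‖(y' - (1 - s) • y) + (1 - s) • y‖ := by rw [← this]
          _ ≤ _ := norm_add_le _ _
      have h2 : ‖y' - (1 - s) • y‖ < s := by rw [norm_sub_rev]; exact hd
      have h3 : ‖(1 - s) • y‖ ≤ 1 - s := by
        rw [norm_smul, Real.norm_eq_abs, abs_of_nonneg (by linarith)]
        nlinarith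
      linarith
    · have h1 : ‖y - y'‖ ≤ ‖y - (1 - s) • y‖ + ‖(1 - s) • y - y'‖ := by
        have : y - y' = (y - (1 - s) • y) + ((1 - s) • y - y') := by abel
        calc ‖y - y'‖ = ‖(y - (1 - s) • y) + ((1 - s) • y - y')‖ := by rw [← this]
          _ ≤ _ := norm_add_le _ _
      have h2 : y - (1 - s) • y = s • y := by
        rw [sub_smul, one_smul]; abel
      have h3 : ‖y - (1 - s) • y‖ ≤ s := by
        rw [h2, norm_smul, Real.norm_eq_abs, abs_of_nonneg (le_of_lt hs0)]
        nlinarith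
      linarith
  -- Hausdorff distance bound
  have hmemball : ∀ x : X, x ∈ Metric.closedBall (0 : X) 1 ↔ ‖x‖ ≤ 1 := by
    intro x; rw [Metric.mem_closedBall, dist_zero_right]
  have hmemballY : ∀ y : Y, y ∈ Metric.closedBall (0 : Y) 1 ↔ ‖y‖ ≤ 1 := by
    intro y; rw [Metric.mem_closedBall, dist_zero_right]
  have hHle : Metric.hausdorffDist (ιX '' Metric.closedBall 0 1) (ιY '' Metric.closedBall 0 1)
      ≤ ε - δ / 4 := by
    refine Metric.hausdorffDist_le_of_mem_dist (by linarith) ?_ ?_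
    · rintro p ⟨x, hx, rfl⟩
      rw [hmemball] at hx
      obtain ⟨x', hx'E, hx'1, hxx'⟩ := happroxE x hx
      obtain ⟨y, hyF, hRxy, hyx⟩ := hRE x' hx'E
      have hy1 : ‖y‖ ≤ 1 := le_trans hyx hx'1
      refine ⟨ιY y, ⟨y, (hmemballY y).mpr hy1, rfl⟩, ?_⟩
      rw [hdistXY]
      have h1 := hsplit1 x x' y
      have h2 := hsingle x' y hRxy
      have h3 : max ‖x'‖ ‖y‖ ≤ 1 := max_le hx'1 hy1
      have h4 : c * max ‖x'‖ ‖y‖ ≤ c * 1 := mul_le_mul_of_nonneg_left h3 (le_of_lt hc0)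
      have h6 : c * (1 : ℝ) = ε - δ / 2 := by rw [hc]; ring
      have h7 : ν (x, -y) ≤ δ / 4 + (ε - δ / 2) :=
        h1.trans (add_le_add hxx' (h2.trans (h4.trans_eq h6)))
      exact h7.trans (by linarith)
    · rintro p ⟨y, hy, rfl⟩
      rw [hmemballY] at hy
      obtain ⟨y', hy'F, hy'1, hyy'⟩ := happroxF y hy
      obtain ⟨x, hxE, hRxy, hxy⟩ := hRF y' hy'F
      have hx1 : ‖x‖ ≤ 1 := le_trans hxy hy'1
      refine ⟨ιX x, ⟨x, (hmemball x).mpr hx1, rfl⟩, ?_⟩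
      rw [dist_comm, hdistXY]
      have h1 := hsplit2 x y y'
      have h2 := hsingle x y' hRxy
      have h3 : max ‖x‖ ‖y'‖ ≤ 1 := max_le hx1 hy'1
      have h4 : c * max ‖x‖ ‖y'‖ ≤ c * 1 := mul_le_mul_of_nonneg_left h3 (le_of_lt hc0)
      have h5 : ‖y' - y‖ ≤ δ / 4 := by rw [norm_sub_rev]; exact hyy'
      have h6 : c * (1 : ℝ) = ε - δ / 2 := by rw [hc]; ring
      have h7 : ν (x, -y) ≤ (ε - δ / 2) + δ / 4 :=
        h1.trans (add_le_add (h2.trans (h4.trans_eq h6)) h5)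
      exact h7.trans (by linarith)
  linarith
end

section
/- Let Z be a real Banach space, let X and Y be infinite-dimensional closed linear subspaces of Z, and let ε > 0 be such that the Hausdorff distance in Z between the closed unit balls B_X and B_Y is less than ε. Let (x_i)_{i∈ℕ} and (y_i)_{i∈ℕ} be dense sequences in the unit spheres S_X of X and S_Y of Y, respectively. Then there exists a bijection π : ℕ → ℕ such that for every finite set F ⊆ ℕ and every choice of signs (δ_i)_{i∈F} ∈ {−1,1}^F one has |‖Σ_{i∈F} δ_i x_i‖ − ‖Σ_{i∈F} δ_i y_{π(i)}‖| < 2|F|ε. -/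
/-!
Every `x i` lies in `B_X`, so the Hausdorff condition puts it within `ε` of `B_Y` and hence
within `2ε` of a point of `S_Y`. As `Y` is infinite-dimensional, `S_Y` is connected and so has no
isolated points; a sequence dense in `S_Y` therefore visits each nonempty relatively open subset
of `S_Y` infinitely often, and `‖x i - y j‖ < 2ε` holds for infinitely many `j`. Symmetrically,
each `y j` is `2ε`-close to infinitely many `x i`. A relation on `ℕ × ℕ` with infinite rows and
columns contains the graph of a bijection (strictly monotone choices in both directions, glued
by Schröder–Bernstein), and along it the triangle inequality bounds the difference of norms by
`∑ i ∈ F, ‖x i - y (π i)‖ < 2 |F| ε`.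
-/

open Set Filter Topology Metric

theorem exists_injective_forall_rel_of_infinite {R : ℕ → ℕ → Prop}
    (h : ∀ i, {j | R i j}.Infinite) : ∃ f : ℕ → ℕ, f.Injective ∧ ∀ i, R i (f i) :=
  let ⟨φ, hφ, hR⟩ :=
    Filter.extraction_forall_of_frequently fun i ↦ Nat.frequently_atTop_iff_infinite.2 (h i)
  ⟨φ, hφ.injective, hR⟩

theorem exists_equiv_forall_rel_of_infinite {R : ℕ → ℕ → Prop}
    (h₁ : ∀ i, {j | R i j}.Infinite) (h₂ : ∀ j, {i | R i j}.Infinite) :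
    ∃ π : ℕ ≃ ℕ, ∀ i, R i (π i) := by
  obtain ⟨f, hf, hfR⟩ := exists_injective_forall_rel_of_infinite h₁
  obtain ⟨g, hg, hgR⟩ := exists_injective_forall_rel_of_infinite (R := flip R) h₂
  obtain ⟨π, hπ, hπR⟩ := Function.Embedding.schroeder_bernstein_of_rel hf hg R hfR hgR
  exact ⟨Equiv.ofBijective π hπ, hπR⟩

theorem infinite_setOf_mem_of_subset_closure_range {X ι : Type*} [TopologicalSpace X]
    [T1Space X] {s U : Set X} {u : ι → X} (hs : s ⊆ closure (range u)) (hU : IsOpen U)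
    (hUs : (U ∩ s).Infinite) : {i | u i ∈ U}.Infinite := by
  intro hfin
  obtain ⟨a, ⟨haU, has⟩, hau⟩ := (hUs.sdiff (hfin.image u)).nonempty
  obtain ⟨_, ⟨hiU, hiF⟩, i, rfl⟩ :=
    mem_closure_iff.1 (hs has) _ (hU.sdiff (hfin.image u).isClosed) ⟨haU, hau⟩
  exact hiF ⟨i, hiU, rfl⟩

theorem Preperfect.infinite_inter {X : Type*} [TopologicalSpace X] [T1Space X] {s U : Set X}
    (hs : Preperfect s) {a : X} (ha : a ∈ s) (hU : U ∈ 𝓝 a) : (U ∩ s).Infinite :=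
  Set.Infinite.of_accPt ((hs a ha).nhds_inter hU)

section Normed

variable {Z : Type*} [NormedAddCommGroup Z] [NormedSpace ℝ Z]

theorem norm_inv_norm_smul {x : Z} (hx : x ≠ 0) : ‖‖x‖⁻¹ • x‖ = 1 := by
  simp [norm_smul, hx]

theorem preperfect_setOf_mem_and_norm_eq_one {Y : Submodule ℝ Z}
    (hY : ¬ FiniteDimensional ℝ Y) : Preperfect {z : Z | z ∈ Y ∧ ‖z‖ = 1} := by
  have hrank : 1 < Module.rank ℝ Y := by
    rw [FiniteDimensional, ← Module.rank_lt_aleph0_iff, not_lt] at hY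
    exact Cardinal.one_lt_aleph0.trans_le hY
  have : Nontrivial Y := rank_pos_iff_nontrivial.1 (zero_lt_one.trans hrank)
  have hS : {z : Z | z ∈ Y ∧ ‖z‖ = 1} = (↑) '' sphere (0 : Y) 1 := by
    ext z
    simp [and_comm]
  rw [hS]
  refine ((isConnected_sphere hrank 0 zero_le_one).image _
    continuous_subtype_val.continuousOn).isPreconnected.preperfect_of_nontrivial ?_
  obtain ⟨u, hu⟩ := (NormedSpace.sphere_nonempty (x := (0 : Y))).2 zero_le_one
  have hu' : -u ∈ sphere (0 : Y) 1 := by simpa using hu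
  refine ⟨u, mem_image_of_mem _ hu, -u, mem_image_of_mem _ hu', ?_⟩
  refine fun h ↦ ne_of_mem_sphere hu one_ne_zero (Subtype.ext ?_)
  simpa [eq_neg_iff_add_eq_zero, ← two_smul ℝ] using h

theorem exists_mem_norm_eq_one_norm_sub_lt_two_mul {Y : Submodule ℝ Z} (hY : Y ≠ ⊥)
    {ε : ℝ} {v w : Z} (hv : ‖v‖ = 1) (hw : w ∈ Y) (hw1 : ‖w‖ ≤ 1) (hvw : ‖v - w‖ < ε) :
    ∃ z ∈ Y, ‖z‖ = 1 ∧ ‖v - z‖ < 2 * ε := by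
  rcases eq_or_ne w 0 with rfl | hw0
  · obtain ⟨z, hzY, hz0⟩ := Submodule.exists_mem_ne_zero_of_ne_bot hY
    refine ⟨‖z‖⁻¹ • z, Y.smul_mem _ hzY, norm_inv_norm_smul hz0, ?_⟩
    rw [sub_zero, hv] at hvw
    calc ‖v - ‖z‖⁻¹ • z‖ ≤ ‖v‖ + ‖‖z‖⁻¹ • z‖ := norm_sub_le _ _
      _ = 2 := by rw [hv, norm_inv_norm_smul hz0]; norm_num
      _ < 2 * ε := by linarith
  · refine ⟨‖w‖⁻¹ • w, Y.smul_mem _ hw, norm_inv_norm_smul hw0, ?_⟩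
    have hww : ‖w - ‖w‖⁻¹ • w‖ = 1 - ‖w‖ := by
      have : w - ‖w‖⁻¹ • w = (‖w‖ - 1) • (‖w‖⁻¹ • w) := by
        rw [smul_smul, sub_mul, mul_inv_cancel₀ (norm_ne_zero_iff.2 hw0), one_mul, sub_smul,
          one_smul]
      rw [this, norm_smul, norm_inv_norm_smul hw0, mul_one, Real.norm_eq_abs,
        abs_of_nonpos (by linarith)]
      ring
    calc ‖v - ‖w‖⁻¹ • w‖ ≤ ‖v - w‖ + ‖w - ‖w‖⁻¹ • w‖ := norm_sub_le_norm_sub_add_norm_sub _ _ _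
      _ ≤ 2 * ‖v - w‖ := by
        rw [hww]; linarith [abs_norm_sub_norm_le v w, le_abs_self (‖v‖ - ‖w‖)]
      _ < 2 * ε := by linarith

theorem abs_norm_sum_smul_sub_norm_sum_smul_le {ι : Type*} (F : Finset ι) {δ : ι → ℝ}
    (hδ : ∀ i ∈ F, |δ i| ≤ 1) (u v : ι → Z) :
    |‖∑ i ∈ F, δ i • u i‖ - ‖∑ i ∈ F, δ i • v i‖| ≤ ∑ i ∈ F, ‖u i - v i‖ :=
  calc |‖∑ i ∈ F, δ i • u i‖ - ‖∑ i ∈ F, δ i • v i‖|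
      ≤ ‖∑ i ∈ F, δ i • (u i - v i)‖ := by
        simpa only [smul_sub, Finset.sum_sub_distrib] using abs_norm_sub_norm_le _ _
    _ ≤ ∑ i ∈ F, ‖u i - v i‖ := by
        refine norm_sum_le_of_le F fun i hi ↦ ?_
        rw [norm_smul, Real.norm_eq_abs]
        exact mul_le_of_le_one_left (norm_nonneg _) (hδ i hi)

theorem infinite_setOf_norm_sub_lt_two_mul {Y : Submodule ℝ Z} (hY : ¬ FiniteDimensional ℝ Y)
    {y : ℕ → Z} (hy : ∀ z : Z, z ∈ Y → ‖z‖ = 1 → ∀ ε' > (0 : ℝ), ∃ i, ‖z - y i‖ < ε')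
    {ε : ℝ} {v w : Z} (hv : ‖v‖ = 1) (hw : w ∈ Y) (hw1 : ‖w‖ ≤ 1) (hvw : ‖v - w‖ < ε) :
    {j | ‖v - y j‖ < 2 * ε}.Infinite := by
  have hY0 : Y ≠ ⊥ := by
    rintro rfl
    exact hY inferInstance
  obtain ⟨z, hzY, hz1, hvz⟩ := exists_mem_norm_eq_one_norm_sub_lt_two_mul hY0 hv hw hw1 hvw
  have hdense : {z : Z | z ∈ Y ∧ ‖z‖ = 1} ⊆ closure (range y) := fun z hz ↦
    mem_closure_range_iff.2 fun e he ↦ by simpa only [dist_eq_norm] using hy z hz.1 hz.2 e he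
  have hball : (ball v (2 * ε) ∩ {z : Z | z ∈ Y ∧ ‖z‖ = 1}).Infinite :=
    (preperfect_setOf_mem_and_norm_eq_one hY).infinite_inter ⟨hzY, hz1⟩
      (isOpen_ball.mem_nhds (by rwa [mem_ball', dist_eq_norm]))
  simpa only [mem_ball', dist_eq_norm] using
    infinite_setOf_mem_of_subset_closure_range hdense isOpen_ball hball

end Normed

theorem stmt10_general (Z : Type*) [NormedAddCommGroup Z] [NormedSpace ℝ Z]
    (X Y : Submodule ℝ Z)
    (hXinf : ¬ FiniteDimensional ℝ X) (hYinf : ¬ FiniteDimensional ℝ Y)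
    (ε : ℝ)
    (hH : Metric.hausdorffDist
      {z : Z | z ∈ X ∧ ‖z‖ ≤ 1} {z : Z | z ∈ Y ∧ ‖z‖ ≤ 1} < ε)
    (x y : ℕ → Z)
    (hxmem : ∀ i, x i ∈ X ∧ ‖x i‖ = 1) (hymem : ∀ i, y i ∈ Y ∧ ‖y i‖ = 1)
    (hxdense : ∀ z : Z, z ∈ X → ‖z‖ = 1 → ∀ ε' > (0 : ℝ), ∃ i, ‖z - x i‖ < ε')
    (hydense : ∀ z : Z, z ∈ Y → ‖z‖ = 1 → ∀ ε' > (0 : ℝ), ∃ i, ‖z - y i‖ < ε') :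
    ∃ π : ℕ ≃ ℕ, ∀ (F : Finset ℕ), F.Nonempty → ∀ δ : ℕ → ℝ,
      (∀ i ∈ F, δ i = 1 ∨ δ i = -1) →
      |‖∑ i ∈ F, δ i • x i‖ - ‖∑ i ∈ F, δ i • y (π i)‖| < 2 * F.card * ε := by
  have hfin : hausdorffEDist {z : Z | z ∈ X ∧ ‖z‖ ≤ 1} {z : Z | z ∈ Y ∧ ‖z‖ ≤ 1} ≠ ⊤ :=
    hausdorffEDist_ne_top_of_nonempty_of_bounded ⟨0, X.zero_mem, by simp⟩ ⟨0, Y.zero_mem, by simp⟩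
      (isBounded_closedBall.subset fun z hz ↦ mem_closedBall_zero_iff.2 hz.2)
      (isBounded_closedBall.subset fun z hz ↦ mem_closedBall_zero_iff.2 hz.2)
  have hrow : ∀ i, {j | ‖x i - y j‖ < 2 * ε}.Infinite := fun i ↦ by
    obtain ⟨w, ⟨hwY, hw1⟩, hw⟩ :=
      exists_dist_lt_of_hausdorffDist_lt (by exact ⟨(hxmem i).1, (hxmem i).2.le⟩) hH hfin
    exact infinite_setOf_norm_sub_lt_two_mul hYinf hydense (hxmem i).2 hwY hw1
      (by rwa [← dist_eq_norm])
  have hcol : ∀ j, {i | ‖x i - y j‖ < 2 * ε}.Infinite := fun j ↦ by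
    obtain ⟨w, ⟨hwX, hw1⟩, hw⟩ :=
      exists_dist_lt_of_hausdorffDist_lt' (by exact ⟨(hymem j).1, (hymem j).2.le⟩) hH hfin
    simpa only [norm_sub_rev] using infinite_setOf_norm_sub_lt_two_mul hXinf hxdense
      (hymem j).2 hwX hw1 (by rwa [← dist_eq_norm'])
  obtain ⟨π, hπ⟩ := exists_equiv_forall_rel_of_infinite hrow hcol
  refine ⟨π, fun F hF δ hδ ↦ ?_⟩
  have hδ1 : ∀ i ∈ F, |δ i| ≤ 1 := fun i hi ↦ by rcases hδ i hi with h | h <;> simp [h]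
  calc _ ≤ ∑ i ∈ F, ‖x i - y (π i)‖ := abs_norm_sum_smul_sub_norm_sum_smul_le F hδ1 x (y ∘ π)
    _ < ∑ _i ∈ F, 2 * ε := Finset.sum_lt_sum_of_nonempty hF fun i _ ↦ hπ i
    _ = 2 * F.card * ε := by rw [Finset.sum_const, nsmul_eq_mul]; ring

theorem stmt10 (Z : Type*) [NormedAddCommGroup Z] [NormedSpace ℝ Z] [CompleteSpace Z]
    (X Y : Submodule ℝ Z)
    (hXc : IsClosed (X : Set Z)) (hYc : IsClosed (Y : Set Z))
    (hXinf : ¬ FiniteDimensional ℝ X) (hYinf : ¬ FiniteDimensional ℝ Y)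
    (ε : ℝ) (hε : 0 < ε)
    (hH : Metric.hausdorffDist
      {z : Z | z ∈ X ∧ ‖z‖ ≤ 1} {z : Z | z ∈ Y ∧ ‖z‖ ≤ 1} < ε)
    (x y : ℕ → Z)
    (hxmem : ∀ i, x i ∈ X ∧ ‖x i‖ = 1) (hymem : ∀ i, y i ∈ Y ∧ ‖y i‖ = 1)
    (hxdense : ∀ z : Z, z ∈ X → ‖z‖ = 1 → ∀ ε' > (0 : ℝ), ∃ i, ‖z - x i‖ < ε')
    (hydense : ∀ z : Z, z ∈ Y → ‖z‖ = 1 → ∀ ε' > (0 : ℝ), ∃ i, ‖z - y i‖ < ε') :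
    ∃ π : ℕ ≃ ℕ, ∀ (F : Finset ℕ), F.Nonempty → ∀ δ : ℕ → ℝ,
      (∀ i ∈ F, δ i = 1 ∨ δ i = -1) →
      |‖∑ i ∈ F, δ i • x i‖ - ‖∑ i ∈ F, δ i • y (π i)‖| < 2 * F.card * ε :=
  stmt10_general Z X Y hXinf hYinf ε hH x y hxmem hymem hxdense hydense
end

section
/- Let f and g be metrics on ℕ such that neither (ℕ,f) nor (ℕ,g) has an isolated point, i.e., for every n ∈ ℕ and every ε > 0 there is m ≠ n with f(n,m) < ε, and likewise for g. Let 0 < s < r and let ℛ ⊆ ℕ × ℕ be a correspondence such that |f(m,m') − g(n,n')| < 2s whenever m ℛ n and m' ℛ n'. Then there exists a bijection π : ℕ → ℕ such that |f(m,n) − g(π(m), π(n))| ≤ 2r for all m, n ∈ ℕ. -/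
/- Context: a metric on ℕ is a function d : ℕ × ℕ → ℝ with d(m,n) = 0 iff m = n,
symmetry, and the triangle inequality.  A correspondence between A and B is a relation
ℛ ⊆ A × B such that every a ∈ A is related to some b ∈ B and vice versa. -/

/-- `d` is a metric on `ℕ`. -/
def IsMetricOnNat (d : ℕ → ℕ → ℝ) : Prop :=
  (∀ m n, d m n = 0 ↔ m = n) ∧ (∀ m n, d m n = d n m) ∧
    (∀ m n k, d m k ≤ d m n + d n k)

/-!
Relate `x` to `y` when some `m ℛ n` has `f(m,x) + g(n,y) < r - s`. Since neither space has
isolated points, every `x` is related to infinitely many `y` and vice versa, so a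
back-and-forth enumeration produces a bijection `π` with `x` related to `π x` for all `x`.
Two triangle inequalities on each side then give
`|f(x,x') - g(π x, π x')| < 2s + 2(r - s) = 2r`.
-/

open Finset Function

namespace IsMetricOnNat

variable {d : ℕ → ℕ → ℝ}

lemma pos_of_ne (hd : IsMetricOnNat d) {m n : ℕ} (h : m ≠ n) : 0 < d m n := by
  obtain ⟨hzero, hsymm, htri⟩ := hd
  have : 0 ≤ d m n := by linarith [htri m n m, hsymm n m, (hzero m m).2 rfl]
  exact this.lt_of_ne fun e => h ((hzero m n).1 e.symm)

lemma abs_sub_le (hd : IsMetricOnNat d) (m m' x x' : ℕ) :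
    |d x x' - d m m'| ≤ d m x + d m' x' := by
  obtain ⟨-, hsymm, htri⟩ := hd
  rw [abs_sub_le_iff]
  constructor
  · linarith [htri x m x', htri m m' x', hsymm x m]
  · linarith [htri m x m', htri x x' m', hsymm x' m']

lemma exists_notMem_lt (hd : IsMetricOnNat d) {n : ℕ}
    (hperf : ∀ ε > (0 : ℝ), ∃ m, m ≠ n ∧ d n m < ε) (B : Finset ℕ) :
    ∀ ε > (0 : ℝ), ∃ y ∉ B, y ≠ n ∧ d n y < ε := by
  induction B using Finset.induction_on with
  | empty => simpa using hperf
  | insert a B _ ih =>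
    intro ε hε
    by_cases han : a = n
    · obtain ⟨y, hyB, hyn, hy⟩ := ih ε hε
      exact ⟨y, by simp [hyB, han ▸ hyn], hyn, hy⟩
    · obtain ⟨y, hyB, hyn, hy⟩ := ih (min ε (d n a)) (lt_min hε (hd.pos_of_ne (Ne.symm han)))
      have hya : y ≠ a := by rintro rfl; exact (min_le_right _ _).not_gt hy
      exact ⟨y, by simp [hyB, hya], hyn, hy.trans_le (min_le_left _ _)⟩

lemma infinite_setOf_lt (hd : IsMetricOnNat d) {n : ℕ}
    (hperf : ∀ ε > (0 : ℝ), ∃ m, m ≠ n ∧ d n m < ε) {ε : ℝ} (hε : 0 < ε) :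
    {y | d n y < ε}.Infinite := fun hfin => by
  obtain ⟨y, hyB, -, hy⟩ := hd.exists_notMem_lt hperf hfin.toFinset ε hε
  exact hyB (hfin.mem_toFinset.2 hy)

end IsMetricOnNat

namespace BackAndForth

def orFresh (m : ℕ) (A : Finset ℕ) : ℕ := if m ∈ A then (A.sup id).succ else m

lemma orFresh_notMem (m : ℕ) (A : Finset ℕ) : orFresh m A ∉ A := by
  unfold orFresh
  split_ifs with h
  · exact fun hA => notMem_range_self (subset_range_sup_succ A hA)
  · exact h

lemma orFresh_eq_or_mem (m : ℕ) (A : Finset ℕ) : orFresh m A = m ∨ m ∈ A := by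
  unfold orFresh
  split_ifs with h <;> simp [h]

variable (fwd bwd : ℕ → Finset ℕ → ℕ)

def step (k : ℕ) (H : Finset (ℕ × ℕ)) : ℕ × ℕ :=
  if Even k then
    let x := orFresh (k / 2) (H.image Prod.fst)
    (x, fwd x (H.image Prod.snd))
  else
    let y := orFresh (k / 2) (H.image Prod.snd)
    (bwd y (H.image Prod.fst), y)

def hist : ℕ → Finset (ℕ × ℕ)
  | 0 => ∅
  | k + 1 => insert (step fwd bwd k (hist k)) (hist k)

def seq (k : ℕ) : ℕ × ℕ := step fwd bwd k (hist fwd bwd k)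

lemma hist_eq_image_range (k : ℕ) : hist fwd bwd k = (range k).image (seq fwd bwd) := by
  induction k with
  | zero => rfl
  | succ k ih => rw [hist, range_add_one, image_insert, ← ih, seq]

lemma image_fst_hist (k : ℕ) :
    (hist fwd bwd k).image Prod.fst = (range k).image (fun j => (seq fwd bwd j).1) := by
  rw [hist_eq_image_range, image_image]; rfl

lemma image_snd_hist (k : ℕ) :
    (hist fwd bwd k).image Prod.snd = (range k).image (fun j => (seq fwd bwd j).2) := by
  rw [hist_eq_image_range, image_image]; rfl

lemma seq_fst_even (m : ℕ) :
    (seq fwd bwd (2 * m)).1 = m ∨ m ∈ (hist fwd bwd (2 * m)).image Prod.fst := by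
  unfold seq step
  rw [if_pos (even_two_mul m), Nat.mul_div_cancel_left m two_pos]
  exact orFresh_eq_or_mem _ _

lemma seq_snd_odd (m : ℕ) :
    (seq fwd bwd (2 * m + 1)).2 = m ∨ m ∈ (hist fwd bwd (2 * m + 1)).image Prod.snd := by
  unfold seq step
  rw [if_neg (Nat.not_even_two_mul_add_one m), show (2 * m + 1) / 2 = m by omega]
  exact orFresh_eq_or_mem _ _

lemma injective_of_notMem_image_range {u : ℕ → ℕ} (h : ∀ k, u k ∉ (range k).image u) :
    Injective u := by
  intro j k e
  by_contra hjk
  rcases Nat.lt_or_gt_of_ne hjk with hlt | hlt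
  · exact h k (mem_image.2 ⟨j, mem_range.2 hlt, e⟩)
  · exact h j (mem_image.2 ⟨k, mem_range.2 hlt, e.symm⟩)

variable {S : ℕ → ℕ → Prop}

lemma step_spec (hfwd : ∀ x B, fwd x B ∉ B ∧ S x (fwd x B))
    (hbwd : ∀ y A, bwd y A ∉ A ∧ S (bwd y A) y) (k : ℕ) (H : Finset (ℕ × ℕ)) :
    (step fwd bwd k H).1 ∉ H.image Prod.fst ∧ (step fwd bwd k H).2 ∉ H.image Prod.snd ∧
      S (step fwd bwd k H).1 (step fwd bwd k H).2 := by
  unfold step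
  split_ifs
  · exact ⟨orFresh_notMem _ _, hfwd _ _⟩
  · exact ⟨(hbwd _ _).1, orFresh_notMem _ _, (hbwd _ _).2⟩

lemma bijective_seq_fst (hfwd : ∀ x B, fwd x B ∉ B ∧ S x (fwd x B))
    (hbwd : ∀ y A, bwd y A ∉ A ∧ S (bwd y A) y) : Bijective fun k => (seq fwd bwd k).1 := by
  refine ⟨injective_of_notMem_image_range fun k => ?_, fun m => ?_⟩
  · rw [← image_fst_hist]
    exact (step_spec fwd bwd hfwd hbwd k _).1
  · rcases seq_fst_even fwd bwd m with h | h
    · exact ⟨_, h⟩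
    · rw [image_fst_hist] at h
      obtain ⟨j, -, hj⟩ := mem_image.1 h
      exact ⟨j, hj⟩

lemma bijective_seq_snd (hfwd : ∀ x B, fwd x B ∉ B ∧ S x (fwd x B))
    (hbwd : ∀ y A, bwd y A ∉ A ∧ S (bwd y A) y) : Bijective fun k => (seq fwd bwd k).2 := by
  refine ⟨injective_of_notMem_image_range fun k => ?_, fun m => ?_⟩
  · rw [← image_snd_hist]
    exact (step_spec fwd bwd hfwd hbwd k _).2.1
  · rcases seq_snd_odd fwd bwd m with h | h
    · exact ⟨_, h⟩
    · rw [image_snd_hist] at h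
      obtain ⟨j, -, hj⟩ := mem_image.1 h
      exact ⟨j, hj⟩

end BackAndForth

open BackAndForth in
theorem exists_equiv_forall_rel_of_infinite_s11 {S : ℕ → ℕ → Prop}
    (hS : ∀ x, {y | S x y}.Infinite) (hS' : ∀ y, {x | S x y}.Infinite) :
    ∃ π : ℕ ≃ ℕ, ∀ x, S x (π x) := by
  choose fwd hfwd using fun x (B : Finset ℕ) => (hS x).exists_notMem_finset B
  choose bwd hbwd using fun y (A : Finset ℕ) => (hS' y).exists_notMem_finset A
  have hfwd' : ∀ x B, fwd x B ∉ B ∧ S x (fwd x B) := fun x B => (hfwd x B).symm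
  have hbwd' : ∀ y A, bwd y A ∉ A ∧ S (bwd y A) y := fun y A => (hbwd y A).symm
  have ha := bijective_seq_fst fwd bwd hfwd' hbwd'
  refine ⟨(Equiv.ofBijective _ ha).symm.trans
    (Equiv.ofBijective _ (bijective_seq_snd fwd bwd hfwd' hbwd')), fun x => ?_⟩
  obtain ⟨k, rfl⟩ := ha.2 x
  simpa [seq] using (step_spec fwd bwd hfwd' hbwd' k _).2.2

theorem stmt11_general (f g : ℕ → ℕ → ℝ) (hf : IsMetricOnNat f) (hg : IsMetricOnNat g)
    -- neither (ℕ,f) nor (ℕ,g) has an isolated point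
    (hfperf : ∀ n : ℕ, ∀ ε > (0 : ℝ), ∃ m, m ≠ n ∧ f n m < ε)
    (hgperf : ∀ n : ℕ, ∀ ε > (0 : ℝ), ∃ m, m ≠ n ∧ g n m < ε)
    (s r : ℝ) (hsr : s < r)
    (R : ℕ → ℕ → Prop)
    (hR1 : ∀ m, ∃ n, R m n) (hR2 : ∀ n, ∃ m, R m n)
    (hR : ∀ m m' n n', R m n → R m' n' → |f m m' - g n n'| < 2 * s) :
    ∃ π : ℕ ≃ ℕ, ∀ m n, |f m n - g (π m) (π n)| ≤ 2 * r := by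
  let S : ℕ → ℕ → Prop := fun x y => ∃ m n, R m n ∧ f m x + g n y < r - s
  have hS : ∀ x, {y | S x y}.Infinite := fun x => by
    obtain ⟨n, hxn⟩ := hR1 x
    refine (hg.infinite_setOf_lt (hgperf n) (sub_pos.2 hsr)).mono fun y hy => ?_
    exact ⟨x, n, hxn, by simpa [(hf.1 x x).2 rfl] using hy⟩
  have hS' : ∀ y, {x | S x y}.Infinite := fun y => by
    obtain ⟨m, hmy⟩ := hR2 y
    refine (hf.infinite_setOf_lt (hfperf m) (sub_pos.2 hsr)).mono fun x hx => ?_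
    exact ⟨m, y, hmy, by simpa [(hg.1 y y).2 rfl] using hx⟩
  obtain ⟨π, hπ⟩ := exists_equiv_forall_rel_of_infinite_s11 hS hS'
  refine ⟨π, fun x x' => ?_⟩
  obtain ⟨m, n, hmn, hx⟩ := hπ x
  obtain ⟨m', n', hmn', hx'⟩ := hπ x'
  have hfx := abs_le.1 (hf.abs_sub_le m m' x x')
  have hgx := abs_le.1 (hg.abs_sub_le n n' (π x) (π x'))
  have hcorr := abs_lt.1 (hR m m' n n' hmn hmn')
  rw [abs_le]
  constructor <;> linarith

theorem stmt11 (f g : ℕ → ℕ → ℝ) (hf : IsMetricOnNat f) (hg : IsMetricOnNat g)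
    -- neither (ℕ,f) nor (ℕ,g) has an isolated point
    (hfperf : ∀ n : ℕ, ∀ ε > (0 : ℝ), ∃ m, m ≠ n ∧ f n m < ε)
    (hgperf : ∀ n : ℕ, ∀ ε > (0 : ℝ), ∃ m, m ≠ n ∧ g n m < ε)
    (s r : ℝ) (hs : 0 < s) (hsr : s < r)
    (R : ℕ → ℕ → Prop)
    (hR1 : ∀ m, ∃ n, R m n) (hR2 : ∀ n, ∃ m, R m n)
    (hR : ∀ m m' n n', R m n → R m' n' → |f m m' - g n n'| < 2 * s) :
    ∃ π : ℕ ≃ ℕ, ∀ m n, |f m n - g (π m) (π n)| ≤ 2 * r :=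
  stmt11_general f g hf hg hfperf hgperf s r hsr R hR1 hR2 hR
end

section
/- There exist countable dense subsets A and B of the unit interval [0,1], each endowed with the metric inherited from ℝ, such that there is no bi-Lipschitz bijection from A onto B, i.e., no bijection T : A → B for which there exists L > 0 with |T(x) − T(y)| ≤ L·|x − y| and |x − y| ≤ L·|T(x) − T(y)| for all x, y ∈ A. (Thus the completions of A and of B, both equal to [0,1], are isometric, while A and B are not bi-Lipschitz equivalent.) -/
open Set

/- Context: a bijection T between metric spaces is bi-Lipschitz if both T and T⁻¹ are
Lipschitz.  We exhibit countable dense subsets A, B of [0,1] (with the metric from ℝ)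
admitting no bi-Lipschitz bijection from A onto B. -/

theorem stmt13 :
    ∃ A B : Set ℝ,
      A ⊆ Set.Icc 0 1 ∧ B ⊆ Set.Icc 0 1 ∧
      A.Countable ∧ B.Countable ∧
      closure A = Set.Icc 0 1 ∧ closure B = Set.Icc 0 1 ∧
      ¬ ∃ (T : ℝ → ℝ) (L : ℝ), 0 < L ∧ Set.BijOn T A B ∧
        ∀ x ∈ A, ∀ y ∈ A,
          |T x - T y| ≤ L * |x - y| ∧ |x - y| ≤ L * |T x - T y| := by
  set B : Set ℝ := Set.Ioo (0:ℝ) 1 ∩ Set.range ((↑) : ℚ → ℝ) with hBdef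
  set A : Set ℝ := insert (0:ℝ) B with hAdef
  have hBsub : B ⊆ Set.Icc 0 1 := fun x hx => Set.Ioo_subset_Icc_self hx.1
  have hAsub : A ⊆ Set.Icc 0 1 := by
    rintro x (rfl | hx)
    · exact ⟨le_refl 0, zero_le_one⟩
    · exact hBsub hx
  have hBcount : B.Countable := (Set.countable_range _).mono (Set.inter_subset_right)
  have hAcount : A.Countable := hBcount.insert 0
  have hBcl : closure B = Set.Icc 0 1 := by
    apply subset_antisymm
    · exact closure_minimal hBsub isClosed_Icc
    · have h1 : Set.Ioo (0:ℝ) 1 ⊆ closure B :=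
        (Rat.denseRange_cast (𝕜 := ℝ)).open_subset_closure_inter isOpen_Ioo
      calc Set.Icc (0:ℝ) 1 = closure (Set.Ioo 0 1) := (closure_Ioo one_ne_zero.symm).symm
        _ ⊆ closure (closure B) := closure_mono h1
        _ = closure B := closure_closure
  have hAcl : closure A = Set.Icc 0 1 := by
    apply subset_antisymm
    · exact closure_minimal hAsub isClosed_Icc
    · rw [← hBcl]; exact closure_mono (Set.subset_insert _ _)
  refine ⟨A, B, hAsub, hBsub, hAcount, hBcount, hAcl, hBcl, ?_⟩
  rintro ⟨T, L, hL, hbij, hlip⟩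
  -- extend T to a Lipschitz function g on ℝ
  have hlipOn : LipschitzOnWith (Real.toNNReal L) T A := by
    rw [lipschitzOnWith_iff_dist_le_mul]
    intro x hx y hy
    have := (hlip x hx y hy).1
    rw [Real.dist_eq, Real.dist_eq]
    rwa [Real.coe_toNNReal L hL.le]
  obtain ⟨g, hg, heq⟩ := hlipOn.extend_real
  have hgc : Continuous g := hg.continuous
  -- g is injective on [0,1]
  have hinj : ∀ x ∈ Set.Icc (0:ℝ) 1, ∀ y ∈ Set.Icc (0:ℝ) 1, g x = g y → x = y := by
    have hclosed : IsClosed {p : ℝ × ℝ | |p.1 - p.2| ≤ L * |g p.1 - g p.2|} := by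
      apply isClosed_le
      · exact (continuous_fst.sub continuous_snd).abs
      · exact continuous_const.mul
          (((hgc.comp continuous_fst).sub (hgc.comp continuous_snd)).abs)
    have hsub : A ×ˢ A ⊆ {p : ℝ × ℝ | |p.1 - p.2| ≤ L * |g p.1 - g p.2|} := by
      rintro ⟨x, y⟩ ⟨hx, hy⟩
      have := (hlip x hx y hy).2
      simpa [← heq hx, ← heq hy] using this
    have hcl : Set.Icc (0:ℝ) 1 ×ˢ Set.Icc (0:ℝ) 1 ⊆
        {p : ℝ × ℝ | |p.1 - p.2| ≤ L * |g p.1 - g p.2|} := by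
      rw [← hAcl, ← closure_prod_eq]
      exact closure_minimal hsub hclosed
    intro x hx y hy hgxy
    have h := hcl (Set.mk_mem_prod hx hy)
    simp only [Set.mem_setOf_eq, hgxy, sub_self, abs_zero, mul_zero] at h
    have : |x - y| = 0 := le_antisymm h (abs_nonneg _)
    linarith [abs_eq_zero.mp this, sub_eq_zero.mp (abs_eq_zero.mp this)]
  -- the image of [0,1] under g contains [0,1]
  have himg : Set.Icc (0:ℝ) 1 ⊆ g '' Set.Icc 0 1 := by
    have hcpt : IsCompact (g '' Set.Icc (0:ℝ) 1) :=
      isCompact_Icc.image hgc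
    have hBimg : B ⊆ g '' Set.Icc (0:ℝ) 1 := by
      intro b hb
      obtain ⟨a, ha, rfl⟩ := hbij.surjOn hb
      exact ⟨a, hAsub ha, (heq ha).symm⟩
    calc Set.Icc (0:ℝ) 1 = closure B := hBcl.symm
      _ ⊆ closure (g '' Set.Icc 0 1) := closure_mono hBimg
      _ = g '' Set.Icc 0 1 := hcpt.isClosed.closure_eq
  -- g 0 = T 0 ∈ (0,1)
  have h0A : (0:ℝ) ∈ A := Set.mem_insert _ _
  have hT0 : g 0 ∈ B := heq h0A ▸ hbij.mapsTo h0A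
  obtain ⟨hb0, hb1⟩ := hT0.1
  -- pick preimages of 0 and 1
  obtain ⟨x, hx, hgx⟩ := himg ⟨le_refl 0, zero_le_one⟩
  obtain ⟨y, hy, hgy⟩ := himg ⟨zero_le_one, le_refl 1⟩
  have hx0 : 0 < x := by
    rcases lt_or_eq_of_le hx.1 with h | h
    · exact h
    · exfalso; rw [← h] at hgx; linarith
  have hy0 : 0 < y := by
    rcases lt_or_eq_of_le hy.1 with h | h
    · exact h
    · exfalso; rw [← h] at hgy; linarith
  -- IVT between x and y
  have hcont : ContinuousOn g (Set.uIcc x y) := hgc.continuousOn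
  have hmem : g 0 ∈ Set.uIcc (g x) (g y) := by
    rw [hgx, hgy, Set.uIcc_of_le zero_le_one]
    exact ⟨hb0.le, hb1.le⟩
  obtain ⟨z, hz, hgz⟩ := intermediate_value_uIcc hcont hmem
  have hzIcc : z ∈ Set.Icc (0:ℝ) 1 := by
    rcases Set.mem_uIcc.mp hz with ⟨h1, h2⟩ | ⟨h1, h2⟩
    · exact ⟨le_trans hx0.le h1, le_trans h2 hy.2⟩
    · exact ⟨le_trans hy0.le h1, le_trans h2 hx.2⟩
  have hz0 : 0 < z := by
    rcases Set.mem_uIcc.mp hz with ⟨h1, _⟩ | ⟨h1, _⟩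
    · exact lt_of_lt_of_le hx0 h1
    · exact lt_of_lt_of_le hy0 h1
  have := hinj z hzIcc 0 ⟨le_refl 0, zero_le_one⟩ hgz
  linarith
end

section
/- Let d, p be metrics on ℕ, let (M_d, (u_i)) and (M_p, (v_j)) be completions of (ℕ,d) and (ℕ,p), and let r > 0. Then there exists a bijection T : M_d → M_p with max{Lip(T), Lip(T⁻¹)} < e^r if and only if there exist r' < r and a sequence of correspondences ℛ_i ⊆ ℕ × ℕ, decreasing in inclusion, such that: (1) for every ε > 0 there exists i such that for every n ∈ ℕ the p-diameter of {m : n ℛ_i m} is less than ε and the d-diameter of {m : m ℛ_i n} is less than ε; (2) for every i and all n, m, n', m' ∈ ℕ with d(n,m) ≥ 2^{−i}, n ℛ_i n' and m ℛ_i m', one has p(n',m') ≤ e^{r'}·d(n,m); (3) for every i and all n, m, n', m' ∈ ℕ with p(n,m) ≥ 2^{−i}, n' ℛ_i n and m' ℛ_i m, one has d(n',m') ≤ e^{r'}·p(n,m). -/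
set_option maxHeartbeats 1600000 in
theorem stmt17 (d p : ℕ → ℕ → ℝ) (hd : IsMetricOnNat d) (hp : IsMetricOnNat p)
    (Md Mp : Type*) [MetricSpace Md] [CompleteSpace Md] [MetricSpace Mp] [CompleteSpace Mp]
    (u : ℕ → Md) (v : ℕ → Mp) (hu : DenseRange u) (hv : DenseRange v)
    (hud : ∀ i j, dist (u i) (u j) = d i j) (hvd : ∀ i j, dist (v i) (v j) = p i j)
    (r : ℝ) (hr : 0 < r) :
    (∃ T : Md → Mp, Function.Bijective T ∧ ∃ K : ℝ, K < Real.exp r ∧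
      (∀ x y : Md, dist (T x) (T y) ≤ K * dist x y) ∧
      (∀ x y : Md, dist x y ≤ K * dist (T x) (T y))) ↔
    (∃ r' : ℝ, r' < r ∧ ∃ R : ℕ → ℕ → ℕ → Prop,
      -- each ℛ_i is a correspondence
      (∀ i, (∀ n, ∃ m, R i n m) ∧ (∀ m, ∃ n, R i n m)) ∧
      -- decreasing in inclusion
      (∀ i n m, R (i + 1) n m → R i n m) ∧
      -- (1) small diameters of the fibers
      (∀ ε > (0 : ℝ), ∃ i : ℕ, ∀ n : ℕ,
        (∀ m m', R i n m → R i n m' → p m m' < ε) ∧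
        (∀ m m', R i m n → R i m' n → d m m' < ε)) ∧
      -- (2)
      (∀ (i : ℕ) (n m n' m' : ℕ), (2 : ℝ) ^ (-(i : ℤ)) ≤ d n m →
        R i n n' → R i m m' → p n' m' ≤ Real.exp r' * d n m) ∧
      -- (3)
      (∀ (i : ℕ) (n m n' m' : ℕ), (2 : ℝ) ^ (-(i : ℤ)) ≤ p n m →
        R i n' n → R i m' m → d n' m' ≤ Real.exp r' * p n m)) := by
  
  constructor
  · rintro ⟨T, hTbij, K, hK, hT1, hT2⟩
    have hhalf : ∀ k : ℕ, (2:ℝ)^(-(k:ℤ)) = (1/2:ℝ)^k := fun k => by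
      rw [zpow_neg, zpow_natCast, one_div, inv_pow]
    have hd01 : 0 < d 0 1 := by
      have h0 : (0:ℝ) ≤ d 0 1 := by rw [← hud]; exact dist_nonneg
      rcases lt_or_eq_of_le h0 with h | h
      · exact h
      · exact absurd ((hd.1 0 1).1 h.symm) (by norm_num)
    have hKpos : 0 < K := by
      by_contra h
      push_neg at h
      have h2 := hT2 (u 0) (u 1)
      rw [hud] at h2
      nlinarith [dist_nonneg (x := T (u 0)) (y := T (u 1))]
    set r' := (Real.log K + r) / 2 with hr'def
    have hlogK : Real.log K < r := by
      have := Real.log_lt_log hKpos hK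
      rwa [Real.log_exp] at this
    have hr'lt : r' < r := by rw [hr'def]; linarith
    have hKlt : K < Real.exp r' := by
      calc K = Real.exp (Real.log K) := (Real.exp_log hKpos).symm
      _ < Real.exp r' := Real.exp_lt_exp.2 (by rw [hr'def]; linarith)
    set M := max K 1 with hM
    have hM1 : (1:ℝ) ≤ M := le_max_right _ _
    have hKM : K ≤ M := le_max_left _ _
    have hMpos : (0:ℝ) < M := lt_of_lt_of_le one_pos hM1
    set c := (Real.exp r' - K) / (2 * M) with hcdef
    have hcpos : 0 < c := div_pos (by linarith) (by linarith)
    have h2Mc : 2 * M * c = Real.exp r' - K := by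
      rw [hcdef]; field_simp
    refine ⟨r', hr'lt, fun i n m => dist (T (u n)) (v m) ≤ c * (1/2:ℝ)^i,
      ?_, ?_, ?_, ?_, ?_⟩
    · intro i
      constructor
      · intro n
        obtain ⟨m, hm⟩ := hv.exists_dist_lt (T (u n)) (show (0:ℝ) < c * (1/2)^i by positivity)
        exact ⟨m, hm.le⟩
      · intro m
        obtain ⟨x, hx⟩ := hTbij.2 (v m)
        obtain ⟨n, hn⟩ := hu.exists_dist_lt x (show (0:ℝ) < c * (1/2)^i / K by positivity)
        refine ⟨n, ?_⟩
        show dist (T (u n)) (v m) ≤ c * (1/2:ℝ)^i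
        rw [← hx]
        calc dist (T (u n)) (T x) ≤ K * dist (u n) x := hT1 _ _
        _ = K * dist x (u n) := by rw [dist_comm]
        _ ≤ K * (c * (1/2)^i / K) := by
            exact mul_le_mul_of_nonneg_left hn.le hKpos.le
        _ = c * (1/2)^i := by field_simp
    · intro i n m h
      refine le_trans h ?_
      have : ((1:ℝ)/2)^(i+1) ≤ (1/2)^i := by
        apply pow_le_pow_of_le_one <;> norm_num
      nlinarith
    · intro ε hε
      obtain ⟨i, hi⟩ := exists_pow_lt_of_lt_one
        (show (0:ℝ) < ε / (2 * M * c) by positivity) (show (1:ℝ)/2 < 1 by norm_num)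
      have hpow : 2 * M * c * ((1:ℝ)/2)^i < ε := by
        have := (lt_div_iff₀ (show (0:ℝ) < 2*M*c by positivity)).1 hi
        linarith
      refine ⟨i, fun N => ⟨?_, ?_⟩⟩
      · intro m m' hm hm'
        rw [← hvd]
        have ht : dist (v m) (v m') ≤ dist (T (u N)) (v m) + dist (T (u N)) (v m') := by
          rw [dist_comm (T (u N)) (v m)]; exact dist_triangle _ _ _
        nlinarith [mul_pos hcpos (pow_pos (show (0:ℝ)<1/2 by norm_num) i)]
      · intro m m' hm hm'
        rw [← hud]
        have ht : dist (T (u m)) (T (u m')) ≤ dist (T (u m)) (v N) + dist (T (u m')) (v N) := by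
          rw [dist_comm (T (u m')) (v N)]; exact dist_triangle _ _ _
        have h2 := hT2 (u m) (u m')
        nlinarith [mul_pos hcpos (pow_pos (show (0:ℝ)<1/2 by norm_num) i),
          dist_nonneg (x := T (u m)) (y := T (u m'))]
    · intro i n m n' m' hge hn' hm'
      rw [hhalf] at hge
      have hpi : (0:ℝ) < (1/2:ℝ)^i := pow_pos (by norm_num) i
      have t1 : (0:ℝ) ≤ (Real.exp r' - K) * (d n m - (1/2)^i) :=
        mul_nonneg (by linarith) (by linarith)
      have t3 : 2*M*c*((1/2:ℝ))^i = (Real.exp r' - K)*((1/2:ℝ))^i := by rw [h2Mc]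
      have key : dist (v n') (v m') ≤
          dist (v n') (T (u n)) + dist (T (u n)) (T (u m)) + dist (T (u m)) (v m') :=
        dist_triangle4 _ _ _ _
      have h1 := hT1 (u n) (u m)
      rw [hud] at h1
      have e1 : dist (v n') (T (u n)) = dist (T (u n)) (v n') := dist_comm _ _
      rw [← hvd]
      nlinarith [mul_nonneg (mul_nonneg (sub_nonneg.2 hM1) hcpos.le) hpi.le]
    · intro i n m n' m' hge hn' hm'
      rw [hhalf] at hge
      have hpi : (0:ℝ) < (1/2:ℝ)^i := pow_pos (by norm_num) i
      have t1 : (0:ℝ) ≤ (Real.exp r' - K) * (p n m - (1/2)^i) :=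
        mul_nonneg (by linarith) (by linarith)
      have t3 : 2*M*c*((1/2:ℝ))^i = (Real.exp r' - K)*((1/2:ℝ))^i := by rw [h2Mc]
      calc d n' m' = dist (u n') (u m') := (hud _ _).symm
      _ ≤ K * dist (T (u n')) (T (u m')) := hT2 _ _
      _ ≤ K * (dist (T (u n')) (v n) + dist (v n) (v m) + dist (v m) (T (u m'))) :=
          mul_le_mul_of_nonneg_left (dist_triangle4 _ _ _ _) hKpos.le
      _ = K * dist (T (u n')) (v n) + K * p n m + K * dist (T (u m')) (v m) := by
          rw [hvd, dist_comm (v m)]; ring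
      _ ≤ Real.exp r' * p n m := by
          nlinarith [mul_le_mul_of_nonneg_left hn' hKpos.le,
            mul_le_mul_of_nonneg_left hm' hKpos.le,
            mul_nonneg (mul_nonneg (sub_nonneg.2 hKM) hcpos.le) hpi.le]
  · rintro ⟨r', hr', R, hcorr, hdec, hdiam, h2, h3⟩
    have hhalf : ∀ k : ℕ, (2:ℝ)^(-(k:ℤ)) = (1/2:ℝ)^k := fun k => by
      rw [zpow_neg, zpow_natCast, one_div, inv_pow]
    set E := Real.exp r' with hE
    have hEpos : 0 < E := Real.exp_pos r'
    have hsub : ∀ i j n m, i ≤ j → R j n m → R i n m := by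
      intro i j n m hij
      induction j, hij using Nat.le_induction with
      | base => exact fun h => h
      | succ j hij ih => exact fun h => ih (hdec j n m h)
    choose a ha using fun i => (hcorr i).1
    choose b hb using fun i => (hcorr i).2
    have hdnonneg : ∀ n m, 0 ≤ d n m := fun n m => by rw [← hud]; exact dist_nonneg
    have hpnonneg : ∀ n m, 0 ≤ p n m := fun n m => by rw [← hvd]; exact dist_nonneg
    -- the map on indices, d-side to p-side
    have hScau : ∀ n, CauchySeq (fun k => v (a k n)) := by
      intro n
      rw [Metric.cauchySeq_iff]
      intro ε hε
      obtain ⟨i, hi⟩ := hdiam ε hε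
      refine ⟨i, fun k hk l hl => ?_⟩
      rw [hvd]
      exact (hi n).1 _ _ (hsub i k n _ hk (ha k n)) (hsub i l n _ hl (ha l n))
    choose S hS using fun n => cauchySeq_tendsto_of_complete (hScau n)
    have hS'cau : ∀ m, CauchySeq (fun k => u (b k m)) := by
      intro m
      rw [Metric.cauchySeq_iff]
      intro ε hε
      obtain ⟨i, hi⟩ := hdiam ε hε
      refine ⟨i, fun k hk l hl => ?_⟩
      rw [hud]
      exact (hi m).2 _ _ (hsub i k _ m hk (hb k m)) (hsub i l _ m hl (hb l m))
    choose S' hS' using fun m => cauchySeq_tendsto_of_complete (hS'cau m)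
    -- Lipschitz estimates on the dense sequences
    have hSlip : ∀ n m, dist (S n) (S m) ≤ E * d n m := by
      intro n m
      rcases eq_or_ne n m with rfl | hne
      · have h0 : d n n = 0 := (hd.1 n n).2 rfl
        have : S n = S n := rfl
        simp [h0]
      · have hpos : 0 < d n m :=
          lt_of_le_of_ne (hdnonneg n m) (fun h => hne ((hd.1 n m).1 h.symm))
        obtain ⟨i₀, hi₀⟩ := exists_pow_lt_of_lt_one hpos (show (1:ℝ)/2 < 1 by norm_num)
        refine le_of_tendsto ((hS n).dist (hS m)) ?_
        rw [Filter.eventually_atTop]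
        refine ⟨i₀, fun k hk => ?_⟩
        rw [hvd]
        refine h2 k n m _ _ ?_ (ha k n) (ha k m)
        rw [hhalf]
        calc ((1:ℝ)/2)^k ≤ (1/2)^i₀ := pow_le_pow_of_le_one (by norm_num) (by norm_num) hk
        _ ≤ d n m := hi₀.le
    have hS'lip : ∀ n m, dist (S' n) (S' m) ≤ E * p n m := by
      intro n m
      rcases eq_or_ne n m with rfl | hne
      · have h0 : p n n = 0 := (hp.1 n n).2 rfl
        simp [h0]
      · have hpos : 0 < p n m :=
          lt_of_le_of_ne (hpnonneg n m) (fun h => hne ((hp.1 n m).1 h.symm))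
        obtain ⟨i₀, hi₀⟩ := exists_pow_lt_of_lt_one hpos (show (1:ℝ)/2 < 1 by norm_num)
        refine le_of_tendsto ((hS' n).dist (hS' m)) ?_
        rw [Filter.eventually_atTop]
        refine ⟨i₀, fun k hk => ?_⟩
        rw [hud]
        refine h3 k n m _ _ ?_ (hb k n) (hb k m)
        rw [hhalf]
        calc ((1:ℝ)/2)^k ≤ (1/2)^i₀ := pow_le_pow_of_le_one (by norm_num) (by norm_num) hk
        _ ≤ p n m := hi₀.le
    -- key approximate-inverse estimates
    have hkey : ∀ ε > (0:ℝ), ∃ i, ∀ n, ∀ k, i ≤ k → dist (u n) (S' (a k n)) ≤ ε := by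
      intro ε hε
      obtain ⟨i, hi⟩ := hdiam ε hε
      refine ⟨i, fun n k hk => ?_⟩
      refine le_of_tendsto (tendsto_const_nhds.dist (hS' (a k n))) ?_
      rw [Filter.eventually_atTop]
      refine ⟨i, fun j hj => ?_⟩
      rw [hud]
      exact ((hi (a k n)).2 n (b j (a k n)) (hsub i k n _ hk (ha k n))
        (hsub i j _ _ hj (hb j (a k n)))).le
    have hkey' : ∀ ε > (0:ℝ), ∃ i, ∀ m, ∀ k, i ≤ k → dist (v m) (S (b k m)) ≤ ε := by
      intro ε hε
      obtain ⟨i, hi⟩ := hdiam ε hε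
      refine ⟨i, fun m k hk => ?_⟩
      refine le_of_tendsto (tendsto_const_nhds.dist (hS (b k m))) ?_
      rw [Filter.eventually_atTop]
      refine ⟨i, fun j hj => ?_⟩
      rw [hvd]
      exact ((hi (b k m)).1 m (a j (b k m)) (hsub i k _ m hk (hb k m))
        (hsub i j _ _ hj (ha j (b k m)))).le
    -- extended maps
    choose w hw using fun (x : Md) (k : ℕ) =>
      hu.exists_dist_lt x (show (0:ℝ) < (1/2)^k by positivity)
    choose w' hw' using fun (ξ : Mp) (k : ℕ) =>
      hv.exists_dist_lt ξ (show (0:ℝ) < (1/2)^k by positivity)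
    have hTcau : ∀ x : Md, CauchySeq (fun k => S (w x k)) := by
      intro x
      rw [Metric.cauchySeq_iff]
      intro ε hε
      obtain ⟨N, hN⟩ := exists_pow_lt_of_lt_one (show (0:ℝ) < ε / (2*E) by positivity)
        (show (1:ℝ)/2 < 1 by norm_num)
      have hN' : ((1:ℝ)/2)^N * (2*E) < ε := (lt_div_iff₀ (by positivity)).1 hN
      refine ⟨N, fun k hk l hl => ?_⟩
      have pk : ((1:ℝ)/2)^k ≤ (1/2)^N := pow_le_pow_of_le_one (by norm_num) (by norm_num) hk
      have pl : ((1:ℝ)/2)^l ≤ (1/2)^N := pow_le_pow_of_le_one (by norm_num) (by norm_num) hl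
      have step : dist (S (w x k)) (S (w x l)) ≤ E * (dist x (u (w x k)) + dist x (u (w x l))) := by
        calc dist (S (w x k)) (S (w x l)) ≤ E * d (w x k) (w x l) := hSlip _ _
        _ = E * dist (u (w x k)) (u (w x l)) := by rw [hud]
        _ ≤ E * (dist x (u (w x k)) + dist x (u (w x l))) :=
            mul_le_mul_of_nonneg_left (dist_triangle_left _ _ _) hEpos.le
      nlinarith [(hw x k).le, (hw x l).le, hEpos, pk, pl]
    have hT'cau : ∀ ξ : Mp, CauchySeq (fun k => S' (w' ξ k)) := by
      intro ξ
      rw [Metric.cauchySeq_iff]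
      intro ε hε
      obtain ⟨N, hN⟩ := exists_pow_lt_of_lt_one (show (0:ℝ) < ε / (2*E) by positivity)
        (show (1:ℝ)/2 < 1 by norm_num)
      have hN' : ((1:ℝ)/2)^N * (2*E) < ε := (lt_div_iff₀ (by positivity)).1 hN
      refine ⟨N, fun k hk l hl => ?_⟩
      have pk : ((1:ℝ)/2)^k ≤ (1/2)^N := pow_le_pow_of_le_one (by norm_num) (by norm_num) hk
      have pl : ((1:ℝ)/2)^l ≤ (1/2)^N := pow_le_pow_of_le_one (by norm_num) (by norm_num) hl
      have step : dist (S' (w' ξ k)) (S' (w' ξ l)) ≤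
          E * (dist ξ (v (w' ξ k)) + dist ξ (v (w' ξ l))) := by
        calc dist (S' (w' ξ k)) (S' (w' ξ l)) ≤ E * p (w' ξ k) (w' ξ l) := hS'lip _ _
        _ = E * dist (v (w' ξ k)) (v (w' ξ l)) := by rw [hvd]
        _ ≤ E * (dist ξ (v (w' ξ k)) + dist ξ (v (w' ξ l))) :=
            mul_le_mul_of_nonneg_left (dist_triangle_left _ _ _) hEpos.le
      nlinarith [(hw' ξ k).le, (hw' ξ l).le, hEpos, pk, pl]
    choose T hT using fun x => cauchySeq_tendsto_of_complete (hTcau x)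
    choose T' hT' using fun ξ => cauchySeq_tendsto_of_complete (hT'cau ξ)
    -- characterization of T, T'
    have hTest : ∀ x m, dist (T x) (S m) ≤ E * dist x (u m) := by
      intro x m
      refine le_of_forall_pos_le_add (fun ε hε => ?_)
      obtain ⟨N1, hN1⟩ := Metric.tendsto_atTop.1 (hT x) (ε/2) (by positivity)
      obtain ⟨N2, hN2⟩ := exists_pow_lt_of_lt_one (show (0:ℝ) < ε/(2*(E+1)) by positivity)
        (show (1:ℝ)/2 < 1 by norm_num)
      have hN2' : ((1:ℝ)/2)^N2 * (2*(E+1)) < ε := (lt_div_iff₀ (by positivity)).1 hN2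
      set k := max N1 N2 with hk
      have hb1 : dist (T x) (S (w x k)) < ε/2 := by
        rw [dist_comm]; exact hN1 k (le_max_left _ _)
      have hk2 : ((1:ℝ)/2)^k ≤ (1/2)^N2 :=
        pow_le_pow_of_le_one (by norm_num) (by norm_num) (le_max_right _ _)
      have hb2 : dist (S (w x k)) (S m) ≤ E * (dist x (u (w x k)) + dist x (u m)) := by
        calc dist (S (w x k)) (S m) ≤ E * d (w x k) m := hSlip _ _
        _ = E * dist (u (w x k)) (u m) := by rw [hud]
        _ ≤ E * (dist x (u (w x k)) + dist x (u m)) :=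
            mul_le_mul_of_nonneg_left (dist_triangle_left _ _ _) hEpos.le
      have tri := dist_triangle (T x) (S (w x k)) (S m)
      nlinarith [(hw x k).le, hEpos, hk2,
        mul_le_mul_of_nonneg_left ((hw x k).le.trans hk2) hEpos.le,
        pow_nonneg (show (0:ℝ) ≤ 1/2 by norm_num) N2]
    have hT'est : ∀ ξ m, dist (T' ξ) (S' m) ≤ E * dist ξ (v m) := by
      intro ξ m
      refine le_of_forall_pos_le_add (fun ε hε => ?_)
      obtain ⟨N1, hN1⟩ := Metric.tendsto_atTop.1 (hT' ξ) (ε/2) (by positivity)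
      obtain ⟨N2, hN2⟩ := exists_pow_lt_of_lt_one (show (0:ℝ) < ε/(2*(E+1)) by positivity)
        (show (1:ℝ)/2 < 1 by norm_num)
      have hN2' : ((1:ℝ)/2)^N2 * (2*(E+1)) < ε := (lt_div_iff₀ (by positivity)).1 hN2
      set k := max N1 N2 with hk
      have hb1 : dist (T' ξ) (S' (w' ξ k)) < ε/2 := by
        rw [dist_comm]; exact hN1 k (le_max_left _ _)
      have hk2 : ((1:ℝ)/2)^k ≤ (1/2)^N2 :=
        pow_le_pow_of_le_one (by norm_num) (by norm_num) (le_max_right _ _)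
      have hb2 : dist (S' (w' ξ k)) (S' m) ≤ E * (dist ξ (v (w' ξ k)) + dist ξ (v m)) := by
        calc dist (S' (w' ξ k)) (S' m) ≤ E * p (w' ξ k) m := hS'lip _ _
        _ = E * dist (v (w' ξ k)) (v m) := by rw [hvd]
        _ ≤ E * (dist ξ (v (w' ξ k)) + dist ξ (v m)) :=
            mul_le_mul_of_nonneg_left (dist_triangle_left _ _ _) hEpos.le
      have tri := dist_triangle (T' ξ) (S' (w' ξ k)) (S' m)
      nlinarith [(hw' ξ k).le, hEpos, hk2,
        mul_le_mul_of_nonneg_left ((hw' ξ k).le.trans hk2) hEpos.le,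
        pow_nonneg (show (0:ℝ) ≤ 1/2 by norm_num) N2]
    have hTu : ∀ n, T (u n) = S n := by
      intro n
      have h := hTest (u n) n
      rw [dist_self, mul_zero] at h
      exact dist_le_zero.1 h
    have hT'v : ∀ m, T' (v m) = S' m := by
      intro m
      have h := hT'est (v m) m
      rw [dist_self, mul_zero] at h
      exact dist_le_zero.1 h
    -- Lipschitz bounds for T, T'
    have hTlip : ∀ x y, dist (T x) (T y) ≤ E * dist x y := by
      intro x y
      refine le_of_forall_pos_le_add (fun ε hε => ?_)
      obtain ⟨N1, hN1⟩ := Metric.tendsto_atTop.1 (hT y) (ε/2) (by positivity)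
      obtain ⟨N2, hN2⟩ := exists_pow_lt_of_lt_one (show (0:ℝ) < ε/(2*(E+1)) by positivity)
        (show (1:ℝ)/2 < 1 by norm_num)
      have hN2' : ((1:ℝ)/2)^N2 * (2*(E+1)) < ε := (lt_div_iff₀ (by positivity)).1 hN2
      set k := max N1 N2 with hk
      have hb1 : dist (S (w y k)) (T y) < ε/2 := hN1 k (le_max_left _ _)
      have hk2 : ((1:ℝ)/2)^k ≤ (1/2)^N2 :=
        pow_le_pow_of_le_one (by norm_num) (by norm_num) (le_max_right _ _)
      have h1 : dist (T x) (S (w y k)) ≤ E * dist x (u (w y k)) := hTest x (w y k)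
      have h2 : dist x (u (w y k)) ≤ dist x y + (1/2)^k := by
        have hy := (hw y k).le
        have := dist_triangle x y (u (w y k))
        linarith
      have tri := dist_triangle (T x) (S (w y k)) (T y)
      nlinarith [hEpos, mul_le_mul_of_nonneg_left h2 hEpos.le,
        mul_le_mul_of_nonneg_left hk2 hEpos.le,
        pow_nonneg (show (0:ℝ) ≤ 1/2 by norm_num) N2]
    have hT'lip : ∀ ξ η, dist (T' ξ) (T' η) ≤ E * dist ξ η := by
      intro ξ η
      refine le_of_forall_pos_le_add (fun ε hε => ?_)
      obtain ⟨N1, hN1⟩ := Metric.tendsto_atTop.1 (hT' η) (ε/2) (by positivity)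
      obtain ⟨N2, hN2⟩ := exists_pow_lt_of_lt_one (show (0:ℝ) < ε/(2*(E+1)) by positivity)
        (show (1:ℝ)/2 < 1 by norm_num)
      have hN2' : ((1:ℝ)/2)^N2 * (2*(E+1)) < ε := (lt_div_iff₀ (by positivity)).1 hN2
      set k := max N1 N2 with hk
      have hb1 : dist (S' (w' η k)) (T' η) < ε/2 := hN1 k (le_max_left _ _)
      have hk2 : ((1:ℝ)/2)^k ≤ (1/2)^N2 :=
        pow_le_pow_of_le_one (by norm_num) (by norm_num) (le_max_right _ _)
      have h1 : dist (T' ξ) (S' (w' η k)) ≤ E * dist ξ (v (w' η k)) := hT'est ξ (w' η k)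
      have h2 : dist ξ (v (w' η k)) ≤ dist ξ η + (1/2)^k := by
        have hy := (hw' η k).le
        have := dist_triangle ξ η (v (w' η k))
        linarith
      have tri := dist_triangle (T' ξ) (S' (w' η k)) (T' η)
      nlinarith [hEpos, mul_le_mul_of_nonneg_left h2 hEpos.le,
        mul_le_mul_of_nonneg_left hk2 hEpos.le,
        pow_nonneg (show (0:ℝ) ≤ 1/2 by norm_num) N2]
    -- inverse identities on the dense sequences
    have hT'S : ∀ n, T' (S n) = u n := by
      intro n
      have hbound : ∀ ε > (0:ℝ), dist (u n) (T' (S n)) ≤ ε := by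
        intro ε hε
        obtain ⟨i, hi⟩ := hkey (ε/2) (by positivity)
        obtain ⟨N, hN⟩ := Metric.tendsto_atTop.1 (hS n) (ε/(2*(E+1))) (by positivity)
        set k := max i N with hk
        have h1 : dist (u n) (S' (a k n)) ≤ ε/2 := hi n k (le_max_left _ _)
        have h2 : dist (v (a k n)) (S n) < ε/(2*(E+1)) := hN k (le_max_right _ _)
        have h2' : dist (v (a k n)) (S n) * (2*(E+1)) < ε :=
          (lt_div_iff₀ (by positivity)).1 h2
        have h3 : dist (T' (S n)) (S' (a k n)) ≤ E * dist (S n) (v (a k n)) :=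
          hT'est (S n) (a k n)
        rw [dist_comm (S n) (v (a k n))] at h3
        have tri := dist_triangle (u n) (S' (a k n)) (T' (S n))
        have hdnn : (0:ℝ) ≤ dist (v (a k n)) (S n) := dist_nonneg
        rw [dist_comm (S' (a k n)) (T' (S n))] at tri
        nlinarith [hEpos]
      have h0 : dist (u n) (T' (S n)) ≤ 0 :=
        le_of_forall_pos_le_add (fun ε hε => by simpa using hbound ε hε)
      exact (dist_le_zero.1 h0).symm
    have hTS' : ∀ m, T (S' m) = v m := by
      intro m
      have hbound : ∀ ε > (0:ℝ), dist (v m) (T (S' m)) ≤ ε := by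
        intro ε hε
        obtain ⟨i, hi⟩ := hkey' (ε/2) (by positivity)
        obtain ⟨N, hN⟩ := Metric.tendsto_atTop.1 (hS' m) (ε/(2*(E+1))) (by positivity)
        set k := max i N with hk
        have h1 : dist (v m) (S (b k m)) ≤ ε/2 := hi m k (le_max_left _ _)
        have h2 : dist (u (b k m)) (S' m) < ε/(2*(E+1)) := hN k (le_max_right _ _)
        have h2' : dist (u (b k m)) (S' m) * (2*(E+1)) < ε :=
          (lt_div_iff₀ (by positivity)).1 h2
        have h3 : dist (T (S' m)) (S (b k m)) ≤ E * dist (S' m) (u (b k m)) :=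
          hTest (S' m) (b k m)
        rw [dist_comm (S' m) (u (b k m))] at h3
        have tri := dist_triangle (v m) (S (b k m)) (T (S' m))
        have hdnn : (0:ℝ) ≤ dist (u (b k m)) (S' m) := dist_nonneg
        rw [dist_comm (S (b k m)) (T (S' m))] at tri
        nlinarith [hEpos]
      have h0 : dist (v m) (T (S' m)) ≤ 0 :=
        le_of_forall_pos_le_add (fun ε hε => by simpa using hbound ε hε)
      exact (dist_le_zero.1 h0).symm
    -- global inverse identities
    have hleft : ∀ x, T' (T x) = x := by
      intro x
      have hbound : ∀ ε > (0:ℝ), dist x (T' (T x)) ≤ ε := by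
        intro ε hε
        obtain ⟨N, hN⟩ := exists_pow_lt_of_lt_one (show (0:ℝ) < ε/(1+E*E) by positivity)
          (show (1:ℝ)/2 < 1 by norm_num)
        have hN' : ((1:ℝ)/2)^N * (1+E*E) < ε := (lt_div_iff₀ (by positivity)).1 hN
        set n := w x N with hn
        have h1 : dist x (u n) < (1/2)^N := hw x N
        have h2 : T' (T (u n)) = u n := by rw [hTu n, hT'S n]
        have h3 : dist (T' (T (u n))) (T' (T x)) ≤ E * (E * dist (u n) x) :=
          le_trans (hT'lip _ _) (mul_le_mul_of_nonneg_left (hTlip _ _) hEpos.le)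
        rw [h2, dist_comm (u n) x] at h3
        have tri := dist_triangle x (u n) (T' (T x))
        nlinarith [hEpos, mul_le_mul_of_nonneg_left h1.le (show (0:ℝ) ≤ E*E by positivity)]
      have h0 : dist x (T' (T x)) ≤ 0 :=
        le_of_forall_pos_le_add (fun ε hε => by simpa using hbound ε hε)
      exact (dist_le_zero.1 h0).symm
    have hright : ∀ ξ, T (T' ξ) = ξ := by
      intro ξ
      have hbound : ∀ ε > (0:ℝ), dist ξ (T (T' ξ)) ≤ ε := by
        intro ε hε
        obtain ⟨N, hN⟩ := exists_pow_lt_of_lt_one (show (0:ℝ) < ε/(1+E*E) by positivity)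
          (show (1:ℝ)/2 < 1 by norm_num)
        have hN' : ((1:ℝ)/2)^N * (1+E*E) < ε := (lt_div_iff₀ (by positivity)).1 hN
        set m := w' ξ N with hm
        have h1 : dist ξ (v m) < (1/2)^N := hw' ξ N
        have h2 : T (T' (v m)) = v m := by rw [hT'v m, hTS' m]
        have h3 : dist (T (T' (v m))) (T (T' ξ)) ≤ E * (E * dist (v m) ξ) :=
          le_trans (hTlip _ _) (mul_le_mul_of_nonneg_left (hT'lip _ _) hEpos.le)
        rw [h2, dist_comm (v m) ξ] at h3
        have tri := dist_triangle ξ (v m) (T (T' ξ))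
        nlinarith [hEpos, mul_le_mul_of_nonneg_left h1.le (show (0:ℝ) ≤ E*E by positivity)]
      have h0 : dist ξ (T (T' ξ)) ≤ 0 :=
        le_of_forall_pos_le_add (fun ε hε => by simpa using hbound ε hε)
      exact (dist_le_zero.1 h0).symm
    refine ⟨T, Function.bijective_iff_has_inverse.2 ⟨T', hleft, hright⟩, E,
      Real.exp_lt_exp.2 hr', hTlip, fun x y => ?_⟩
    calc dist x y = dist (T' (T x)) (T' (T y)) := by rw [hleft, hleft]
    _ ≤ E * dist (T x) (T y) := hT'lip _ _
end

section
/- Let X and Y be real Banach spaces, let 0 < K < 1/4, and let φ : X → Y be a bijection such that |min{1, ‖x − y‖_X} − min{1, ‖φ(x) − φ(y)‖_Y}| < 2K for all x, y ∈ X. Then ‖φ(x) − φ(y)‖_Y ≤ (1 + 6K)·‖x − y‖_X for all x, y ∈ X with ‖x − y‖_X ≥ 1. -/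
/- Context: X and Y are real Banach spaces with norms ‖·‖_X and ‖·‖_Y. -/

theorem stmt18 (X Y : Type*)
    [NormedAddCommGroup X] [NormedSpace ℝ X] [CompleteSpace X]
    [NormedAddCommGroup Y] [NormedSpace ℝ Y] [CompleteSpace Y]
    (K : ℝ) (hK0 : 0 < K) (hK : K < 1 / 4)
    (φ : X → Y) (hφ : Function.Bijective φ)
    (hclose : ∀ x y : X, |min 1 ‖x - y‖ - min 1 ‖φ x - φ y‖| < 2 * K) :
    ∀ x y : X, 1 ≤ ‖x - y‖ → ‖φ x - φ y‖ ≤ (1 + 6 * K) * ‖x - y‖ := by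
  intro x y hxy
  set d : ℝ := ‖x - y‖ with hd
  have hd1 : (1:ℝ) ≤ d := hxy
  set n : ℕ := ⌈2*d⌉₊ with hn
  have hnR : (2*d) ≤ (n:ℝ) := Nat.le_ceil _
  have hnpos : (0:ℝ) < n := lt_of_lt_of_le (by linarith) hnR
  have hn0 : (n:ℝ) ≠ 0 := ne_of_gt hnpos
  have hnlt : (n:ℝ) < 2*d + 1 := Nat.ceil_lt_add_one (by linarith)
  set p : ℕ → X := fun i => x + ((i:ℝ)/n) • (y - x) with hp
  have hp0 : p 0 = x := by simp [hp]
  have hpn : p n = y := by simp [hp, div_self hn0]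
  have hstep : ∀ i : ℕ, ‖p i - p (i+1)‖ = d / n := by
    intro i
    have hdiff : p i - p (i+1) = (-(1/(n:ℝ))) • (y - x) := by
      simp only [hp]
      have hc : ((i:ℝ)/n) - (((i:ℕ)+1:ℝ))/n = -(1/(n:ℝ)) := by
        push_cast; ring
      rw [← hc, sub_smul]
      push_cast
      abel
    rw [hdiff, norm_smul]
    rw [norm_sub_rev y x, ← hd]
    rw [norm_neg, Real.norm_eq_abs, abs_of_pos (by positivity : (0:ℝ) < 1/(n:ℝ))]
    ring
  have hdn : d / n ≤ 1/2 := by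
    rw [div_le_iff₀ hnpos]; linarith
  have hbound : ∀ i : ℕ, ‖φ (p i) - φ (p (i+1))‖ ≤ d/n + 2*K := by
    intro i
    have hc := hclose (p i) (p (i+1))
    rw [hstep i] at hc
    rw [min_eq_right (by linarith : d/n ≤ 1)] at hc
    by_cases h : ‖φ (p i) - φ (p (i+1))‖ ≤ 1
    · rw [min_eq_right h] at hc
      have := abs_lt.1 hc
      linarith [this.1]
    · rw [min_eq_left (le_of_not_ge h)] at hc
      have := abs_lt.1 hc
      linarith [this.1]
  have htel : φ x - φ y = ∑ i ∈ Finset.range n, (φ (p i) - φ (p (i+1))) := by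
    rw [Finset.sum_range_sub' (fun i => φ (p i)), hp0, hpn]
  calc ‖φ x - φ y‖ = ‖∑ i ∈ Finset.range n, (φ (p i) - φ (p (i+1)))‖ := by rw [htel]
    _ ≤ ∑ i ∈ Finset.range n, ‖φ (p i) - φ (p (i+1))‖ := norm_sum_le _ _
    _ ≤ ∑ i ∈ Finset.range n, (d/n + 2*K) := Finset.sum_le_sum (fun i _ => hbound i)
    _ = (n:ℝ) * (d/n + 2*K) := by
        rw [Finset.sum_const, Finset.card_range, nsmul_eq_mul]
    _ = d + 2*K*n := by field_simp
    _ ≤ (1 + 6*K) * d := by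
        have h1 : K * (n:ℝ) < K * (2*d+1) := mul_lt_mul_of_pos_left hnlt hK0
        have h2 : 0 ≤ K * (d - 1) := mul_nonneg hK0.le (by linarith)
        nlinarith
end
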